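/- arXiv:2203.02320 — 8 statements merged into one kernel-verified Lean document; each statement's English description precedes it below -/
import Mathlib

section
/- Let X be a finite set with a weight μ : X → [0,∞), let Y_1, …, Y_d be finite sets with lattice norms N_j on ℝ^{Y_j}, let K : X × Y_1 × ⋯ × Y_d → [0,∞) be a kernel with associated positive multilinear operator T, and suppose T saturates X. Let 1 ≤ q < ∞ with conjugate exponent q', and let A, B > 0. Assume: (i) for all nonnegative f_j ∈ ℝ^{Y_j}, ‖T(f_1,…,f_d)^{1/d}‖_{L^q(μ)} ≤ A (N_1(f_1)⋯N_d(f_d))^{1/d}; and (ii) for all nonnegative f_1,…,f_d there exist functions S_j : X × Y_j → [0,∞) such that K(x,y_1,…,y_d) ≤ S_1(x,y_1)⋯S_d(x,y_d) for all x, y_1, …, y_d, and ∏_{j=1}^d (Σ_{y_j∈Y_j} S_j(x,y_j) f_j(y_j)) ≤ B^d · T(f_1,…,f_d)(x) for all x ∈ X. Then for every M : X → [0,∞) with ‖M‖_{ℓ^{q'}(μ)} ≤ 1 there exist kernels g_j : X × Y_j → [0,∞) such that M(x)^d K(x,y_1,…,y_d) ≤ g_1(x,y_1)⋯g_d(x,y_d)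 for all x, y_1, …, y_d, and for every j and every nonnegative f ∈ ℝ^{Y_j}, Σ_{x∈X} μ(x) Σ_{y∈Y_j} g_j(x,y) f(y) ≤ A·B·N_j(f). -/
/-!
By Sion's minimax theorem it suffices to find, for each test tuple `f ≥ 0` with
`∑ j, N j (f j) ≤ 1` and each `ε > 0`, one admissible factorization `g` whose cost
`∑ j, ∑ x, μ x * ∑ y, g j x y * f j y` is below `A * B + ε`: the cost is bilinear, the admissible
`g` form a convex set (weighted AM-GM) and the test tuples a compact convex one.

For a fixed `f`, made strictly positive by a small perturbation, take the `S j` of (ii) and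
rescale them pointwise, `g j x = t j x • S j x`, so that `∏ j, t j x = M x ^ d` while every
marginal `t j x * ∑ y, S j x y * f j y` equals `M x` times the geometric mean of these marginals.
By (ii) the cost is then at most `d * B * ∑ x, μ x * M x * T f x ^ (1 / d)`, and Hölder, (i) and
AM-GM bound this by `d * A * B * (∏ j, N j (f j)) ^ (1 / d) ≤ A * B`.

The `ε` is removed by compactness: once normalised on the null set of `μ`, the factorizations of
cost at most `c` on every test tuple form compact sets decreasing with `c`.
-/

open Finset

theorem le_prod_mul_add_mul {ι : Type*} (s : Finset ι) {a b : ι → ℝ} (ha : 0 ≤ a) (hb : 0 ≤ b)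
    {c θ φ : ℝ} (hca : c ≤ ∏ i ∈ s, a i) (hcb : c ≤ ∏ i ∈ s, b i) (hθ : 0 ≤ θ) (hφ : 0 ≤ φ)
    (hθφ : θ + φ = 1) : c ≤ ∏ i ∈ s, (θ * a i + φ * b i) := by
  rcases le_or_gt c 0 with hc | hc
  · exact hc.trans (prod_nonneg fun i _ => add_nonneg (mul_nonneg hθ (ha i)) (mul_nonneg hφ (hb i)))
  calc c = c ^ θ * c ^ φ := by rw [← Real.rpow_add hc, hθφ, Real.rpow_one]
    _ ≤ (∏ i ∈ s, a i) ^ θ * (∏ i ∈ s, b i) ^ φ :=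
      mul_le_mul (Real.rpow_le_rpow hc.le hca hθ) (Real.rpow_le_rpow hc.le hcb hφ)
        (Real.rpow_nonneg hc.le _) (Real.rpow_nonneg (hc.le.trans hca) _)
    _ = ∏ i ∈ s, (a i ^ θ * b i ^ φ) := by
      rw [prod_mul_distrib, Real.finsetProd_rpow _ _ (fun i _ => ha i),
        Real.finsetProd_rpow _ _ (fun i _ => hb i)]
    _ ≤ ∏ i ∈ s, (θ * a i + φ * b i) :=
      prod_le_prod (fun i _ => mul_nonneg (Real.rpow_nonneg (ha i) _) (Real.rpow_nonneg (hb i) _))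
        fun i _ => Real.geom_mean_le_arith_mean2_weighted hθ hφ (ha i) (hb i) hθφ

theorem rpow_prod_le_sum_div {d : ℕ} (hd : d ≠ 0) {z : Fin d → ℝ} (hz : 0 ≤ z) :
    (∏ j, z j) ^ (1 / (d : ℝ)) ≤ (∑ j, z j) / d := by
  simpa using Real.geom_mean_le_arith_mean univ 1 z (fun _ _ => by simp)
    (by simp [Nat.pos_of_ne_zero hd]) fun j _ => hz j

theorem exists_prod_eq_pow_sum_mul_eq {d : ℕ} (hd : d ≠ 0) {b : Fin d → ℝ} (hb : ∀ j, 0 < b j)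
    {m : ℝ} (hm : 0 ≤ m) :
    ∃ t : Fin d → ℝ, 0 ≤ t ∧ ∏ j, t j = m ^ d ∧
      ∑ j, t j * b j = d * m * (∏ j, b j) ^ (1 / (d : ℝ)) := by
  set G := (∏ j, b j) ^ (1 / (d : ℝ))
  have hP : 0 < ∏ j, b j := prod_pos fun j _ => hb j
  have hG : G ^ d = ∏ j, b j := by simp only [G]; rw [one_div, Real.rpow_inv_natCast_pow hP.le hd]
  refine ⟨fun j => m * G / b j, fun j => by have := hb j; positivity, ?_, ?_⟩
  · rw [prod_div_distrib, prod_const, card_univ, Fintype.card_fin, mul_pow, hG,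
      mul_div_cancel_right₀ _ hP.ne']
  · simp [div_mul_cancel₀ _ (hb _).ne', mul_assoc]

theorem exists_nonneg_forall_le_pow {ι : Type*} [Fintype ι] {d : ℕ} (hd : d ≠ 0) (F : ι → ℝ) :
    ∃ h : ℝ, 0 ≤ h ∧ ∀ i, F i ≤ h ^ d := by
  refine ⟨1 + ∑ i, |F i|, by positivity, fun i => ?_⟩
  calc F i ≤ |F i| := le_abs_self _
    _ ≤ ∑ i, |F i| := single_le_sum (fun i _ => abs_nonneg (F i)) (mem_univ i)
    _ ≤ 1 + ∑ i, |F i| := le_add_of_nonneg_left zero_le_one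
    _ ≤ (1 + ∑ i, |F i|) ^ d :=
      le_self_pow₀ (le_add_of_nonneg_right (sum_nonneg fun i _ => abs_nonneg _)) hd

theorem exists_forall_mem_of_monotone {α : Type*} [TopologicalSpace α] [T2Space α]
    {S : ℝ → Set α} {c₀ : ℝ} (hS : Monotone S) (hne : ∀ c, c₀ < c → (S c).Nonempty)
    (hcpt : ∀ c, IsCompact (S c)) : ∃ a, ∀ c, c₀ < c → a ∈ S c := by
  obtain ⟨a, ha⟩ := IsCompact.nonempty_iInter_of_directed_nonempty_isCompact_isClosed
    (fun c : Set.Ioi c₀ => S c)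
    (fun c c' => ⟨⟨min c c', Set.mem_Ioi.2 (lt_min c.2 c'.2)⟩, hS (min_le_left _ _),
      hS (min_le_right _ _)⟩)
    (fun c => hne c c.2) (fun c => hcpt c) fun c => (hcpt c).isClosed
  exact ⟨a, fun c hc => Set.mem_iInter.1 ha ⟨c, hc⟩⟩

theorem LinearMap.exists_forall_lt_of_forall_exists_lt {E F : Type*}
    [TopologicalSpace E] [AddCommGroup E] [Module ℝ E] [IsTopologicalAddGroup E]
    [ContinuousSMul ℝ E] [TopologicalSpace F] [AddCommGroup F] [Module ℝ F]
    [IsTopologicalAddGroup F] [ContinuousSMul ℝ F]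
    (L : F →ₗ[ℝ] E →ₗ[ℝ] ℝ) (hL : ∀ g, Continuous (L g)) (hL' : ∀ f, Continuous (L.flip f))
    {B : Set E} {C : Set F} (hBne : B.Nonempty) (hBconv : Convex ℝ B) (hBcpt : IsCompact B)
    (hCconv : Convex ℝ C) {c : ℝ} (h : ∀ f ∈ B, ∃ g ∈ C, L g f < c) :
    ∃ g ∈ C, ∀ f ∈ B, L g f < c := by
  obtain ⟨s, hsC, hs, hBs⟩ := hBcpt.elim_finite_subcover_image (b := C)
    (c := fun g => {f | L g f < c}) (fun g _ => isOpen_lt (hL g) continuous_const)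
    fun f hf => by simpa using h f hf
  have key := Sion.exists_lt_iInf_of_lt_iInf_of_finite (f := fun f g => -L g f) (t := -c)
    hBne hBcpt (fun g _ => (hL g).neg.lowerSemicontinuous.lowerSemicontinuousOn B)
    (fun g _ => ((-L g).convexOn hBconv).quasiconvexOn) hCconv
    (fun f _ => (hL' f).neg.upperSemicontinuous.upperSemicontinuousOn C)
    (fun f _ => ((-L.flip f).concaveOn hCconv).quasiconcaveOn) hBconv hs hsC
    fun f hf => by simpa using hBs hf
  simpa using key

theorem sum_mul_mul_le_rpow {X : Type*} [Fintype X] {μ M v : X → ℝ} {q : ℝ} (hμ : 0 ≤ μ)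
    (hM : 0 ≤ M) (hv : 0 ≤ v) (hq : 1 ≤ q) (hM1 : q = 1 → ∀ x, M x ≤ 1)
    (hMq : 1 < q → (∑ x, μ x * M x ^ (q / (q - 1))) ^ ((q - 1) / q) ≤ 1) :
    ∑ x, μ x * (M x * v x) ≤ (∑ x, μ x * v x ^ q) ^ (1 / q) := by
  rcases hq.eq_or_lt with rfl | hq
  · simp only [Real.rpow_one, div_one]
    exact sum_le_sum fun x _ =>
      mul_le_mul_of_nonneg_left (mul_le_of_le_one_left (hv x) (hM1 rfl x)) (hμ x)
  set p := q / (q - 1)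
  have hpq : p.HolderConjugate q := ((Real.holderConjugate_iff_eq_conjExponent hq).2 rfl).symm
  -- split the weight as `μ = μ ^ (1 / p) * μ ^ (1 / q)` and apply the unweighted inequality
  have split : ∀ {r : ℝ}, r ≠ 0 → ∀ x {w : ℝ}, 0 ≤ w → (μ x ^ (1 / r) * w) ^ r = μ x * w ^ r :=
    fun hr x w hw => by
      rw [Real.mul_rpow (Real.rpow_nonneg (hμ x) _) hw, ← Real.rpow_mul (hμ x),
        one_div_mul_cancel hr, Real.rpow_one]
  have holder := Real.inner_le_Lp_mul_Lq_of_nonneg univ hpq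
    (f := fun x => μ x ^ (1 / p) * M x) (g := fun x => μ x ^ (1 / q) * v x)
    (fun x _ => mul_nonneg (Real.rpow_nonneg (hμ x) _) (hM x))
    (fun x _ => mul_nonneg (Real.rpow_nonneg (hμ x) _) (hv x))
  simp only [split hpq.ne_zero _ (hM _), split hpq.symm.ne_zero _ (hv _)] at holder
  have hMp : (∑ x, μ x * M x ^ p) ^ (1 / p) ≤ 1 := by
    rw [show 1 / p = (q - 1) / q by rw [one_div_div]]; exact hMq hq
  have hμpq : ∀ x, μ x ^ (1 / p) * μ x ^ (1 / q) = μ x := fun x => by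
    rw [← Real.rpow_add' (hμ x) (by rw [hpq.one_div_add_one_div]; norm_num),
      hpq.one_div_add_one_div, div_one, Real.rpow_one]
  calc ∑ x, μ x * (M x * v x)
      = ∑ x, μ x ^ (1 / p) * M x * (μ x ^ (1 / q) * v x) :=
        (sum_congr rfl fun x _ => by rw [mul_mul_mul_comm, hμpq x]).symm
    _ ≤ (∑ x, μ x * M x ^ p) ^ (1 / p) * (∑ x, μ x * v x ^ q) ^ (1 / q) := holder
    _ ≤ (∑ x, μ x * v x ^ q) ^ (1 / q) :=
      mul_le_of_le_one_left (Real.rpow_nonneg (sum_nonneg fun x _ =>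
        mul_nonneg (hμ x) (Real.rpow_nonneg (hv x) _)) _) hMp

namespace MultilinearDuality

variable {d : ℕ} {X : Type*} {Y : Fin d → Type*}

def factorizations (M : X → ℝ) (K : X → (∀ j, Y j) → ℝ) : Set (∀ j, X → Y j → ℝ) :=
  {g | 0 ≤ g ∧ ∀ x y, M x ^ d * K x y ≤ ∏ j, g j x (y j)}

def testSet (N : ∀ j, Seminorm ℝ (Y j → ℝ)) : Set (∀ j, Y j → ℝ) :=
  {f | 0 ≤ f ∧ ∑ j, N j (f j) ≤ 1}

theorem convex_factorizations {M : X → ℝ} {K : X → (∀ j, Y j) → ℝ} :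
    Convex ℝ (factorizations M K) := by
  rintro g ⟨hg0, hg⟩ g' ⟨hg'0, hg'⟩ θ φ hθ hφ hθφ
  refine ⟨convex_Ici (0 : ∀ j, X → Y j → ℝ) hg0 hg'0 hθ hφ hθφ, fun x y => ?_⟩
  simpa using le_prod_mul_add_mul univ (fun j => hg0 j x (y j)) (fun j => hg'0 j x (y j))
    (hg x y) (hg' x y) hθ hφ hθφ

theorem isClosed_factorizations {M : X → ℝ} {K : X → (∀ j, Y j) → ℝ} :
    IsClosed (factorizations M K) := by
  refine (isClosed_le continuous_const continuous_id).inter ?_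
  show IsClosed {g : ∀ j, X → Y j → ℝ | ∀ x y, M x ^ d * K x y ≤ ∏ j, g j x (y j)}
  simp only [Set.ofPred_forall]
  exact isClosed_iInter fun x => isClosed_iInter fun y => isClosed_le continuous_const <|
    continuous_finsetProd _ fun j _ => by fun_prop

section TestSet

variable (N : ∀ j, Seminorm ℝ (Y j → ℝ))

theorem zero_mem_testSet : (0 : ∀ j, Y j → ℝ) ∈ testSet N := by
  simp [testSet]

theorem single_mem_testSet {j : Fin d} {v : Y j → ℝ} (hv0 : 0 ≤ v) (hv1 : N j v ≤ 1) :
    Pi.single j v ∈ testSet N := by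
  refine ⟨Pi.single_nonneg.2 hv0, ?_⟩
  rwa [sum_eq_single j (fun k _ hk => by simp [Pi.single_eq_of_ne hk]) (by simp),
    Pi.single_eq_same]

theorem convex_testSet : Convex ℝ (testSet N) := by
  rintro f ⟨hf0, hf1⟩ f' ⟨hf'0, hf'1⟩ θ φ hθ hφ hθφ
  refine ⟨convex_Ici (0 : ∀ j, Y j → ℝ) hf0 hf'0 hθ hφ hθφ, ?_⟩
  calc ∑ j, N j ((θ • f + φ • f') j) ≤ ∑ j, (θ * N j (f j) + φ * N j (f' j)) :=
        sum_le_sum fun j _ => (map_add_le_add _ _ _).trans_eq <| by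
          simp [map_smul_eq_mul, abs_of_nonneg hθ, abs_of_nonneg hφ]
    _ = θ * ∑ j, N j (f j) + φ * ∑ j, N j (f' j) := by simp only [sum_add_distrib, mul_sum]
    _ ≤ 1 := by nlinarith

end TestSet

variable [∀ j, Fintype (Y j)]

theorem isClosed_testSet (N : ∀ j, Seminorm ℝ (Y j → ℝ)) : IsClosed (testSet N) :=
  (isClosed_le continuous_const continuous_id).inter <|
    isClosed_le (f := fun f : ∀ j, Y j → ℝ => ∑ j, N j (f j)) (continuous_finsetSum _ fun j _ =>
      (N j).convexOn.locallyLipschitz.continuous.comp (continuous_apply j)) continuous_const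

theorem isCompact_testSet (N : ∀ j, Seminorm ℝ (Y j → ℝ))
    (hlat : ∀ j (f g : Y j → ℝ), (∀ y, |f y| ≤ |g y|) → N j f ≤ N j g)
    (hdef : ∀ j f, N j f = 0 → f = 0) : IsCompact (testSet N) := by
  classical
  have hsingle : ∀ j (y : Y j), 0 < N j (Pi.single y 1) := fun j y =>
    (apply_nonneg _ _).lt_of_ne' fun h => by simpa using congrFun (hdef j _ h) y
  refine (isCompact_Icc (a := 0) (b := fun j y => (N j (Pi.single y 1))⁻¹)).of_isClosed_subset
    (isClosed_testSet N) fun f ⟨hf0, hf1⟩ => ⟨hf0, fun j y => ?_⟩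
  show f j y ≤ (N j (Pi.single y 1))⁻¹
  rw [← one_div, le_div_iff₀ (hsingle j y)]
  calc f j y * N j (Pi.single y 1) = N j (f j y • Pi.single y 1) := by
        rw [map_smul_eq_mul, Real.norm_of_nonneg (hf0 j y)]
    _ ≤ N j (f j) := hlat j _ _ fun y' => by
        by_cases h : y' = y
        · subst h; simp
        · simp [Pi.single_eq_of_ne h]
    _ ≤ ∑ j, N j (f j) := single_le_sum (fun j _ => apply_nonneg _ _) (mem_univ j)
    _ ≤ 1 := hf1

def kernelOp (K : X → (∀ j, Y j) → ℝ) (f : ∀ j, Y j → ℝ) (x : X) : ℝ :=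
  ∑ y : ∀ j, Y j, K x y * ∏ j, f j (y j)

theorem kernelOp_nonneg {K : X → (∀ j, Y j) → ℝ} (hK : 0 ≤ K) {f : ∀ j, Y j → ℝ} (hf : 0 ≤ f) :
    0 ≤ kernelOp K f :=
  fun x => sum_nonneg fun y _ => mul_nonneg (hK x y) (prod_nonneg fun j _ => hf j (y j))

theorem exists_rescaling_sum_le_geomMean (hd : d ≠ 0) {S u : ∀ j, Y j → ℝ} (hS : 0 ≤ S)
    (hu : ∀ j y, 0 < u j y) {k : (∀ j, Y j) → ℝ} (hk : ∀ y, k y ≤ ∏ j, S j (y j)) {m : ℝ}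
    (hm : 0 ≤ m) :
    ∃ t : Fin d → ℝ, 0 ≤ t ∧ (∀ y, m ^ d * k y ≤ ∏ j, t j * S j (y j)) ∧
      ∑ j, t j * ∑ y, S j y * u j y ≤ d * m * (∏ j, ∑ y, S j y * u j y) ^ (1 / (d : ℝ)) := by
  have hSu : ∀ j y, 0 ≤ S j y * u j y := fun j y => mul_nonneg (hS j y) (hu j y).le
  by_cases hb : ∀ j, 0 < ∑ y, S j y * u j y
  · obtain ⟨t, ht0, htprod, htsum⟩ := exists_prod_eq_pow_sum_mul_eq hd hb hm
    refine ⟨t, ht0, fun y => ?_, htsum.le⟩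
    rw [prod_mul_distrib, htprod]
    exact mul_le_mul_of_nonneg_left (hk y) (pow_nonneg hm d)
  -- otherwise some `S j` vanishes identically, and then `k ≤ 0`
  obtain ⟨j₀, hj₀⟩ := not_forall.1 hb
  replace hj₀ := not_lt.1 hj₀
  have hS0 : ∀ y, S j₀ y = 0 := fun y =>
    (mul_eq_zero.1 ((sum_eq_zero_iff_of_nonneg fun y _ => hSu j₀ y).1
      (hj₀.antisymm (sum_nonneg fun y _ => hSu j₀ y)) y (mem_univ y))).resolve_right
      (hu j₀ y).ne'
  refine ⟨0, le_rfl, fun y => ?_, ?_⟩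
  · have hky : k y ≤ 0 := (hk y).trans_eq (prod_eq_zero (mem_univ j₀) (hS0 _))
    simpa [zero_pow hd] using mul_nonpos_of_nonneg_of_nonpos (pow_nonneg hm d) hky
  · simp only [Pi.zero_apply, zero_mul, sum_const_zero]
    exact mul_nonneg (mul_nonneg (Nat.cast_nonneg d) hm)
      (Real.rpow_nonneg (prod_nonneg fun j _ => sum_nonneg fun y _ => hSu j y) _)

variable [Fintype X]

def pairing (μ : X → ℝ) : (∀ j, X → Y j → ℝ) →ₗ[ℝ] (∀ j, Y j → ℝ) →ₗ[ℝ] ℝ :=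
  LinearMap.mk₂ ℝ (fun g f => ∑ j, ∑ x, μ x * ∑ y, g j x y * f j y)
    (fun _ _ _ => by simp only [Pi.add_apply, add_mul, sum_add_distrib, mul_add])
    (fun _ _ _ => by simp only [Pi.smul_apply, smul_eq_mul, mul_sum, mul_assoc, mul_left_comm])
    (fun _ _ _ => by simp only [Pi.add_apply, mul_add, sum_add_distrib])
    (fun _ _ _ => by simp only [Pi.smul_apply, smul_eq_mul, mul_sum, mul_left_comm])

variable {μ M : X → ℝ} {K : X → (∀ j, Y j) → ℝ}

theorem pairing_apply (g : ∀ j, X → Y j → ℝ) (f : ∀ j, Y j → ℝ) :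
    pairing μ g f = ∑ j, ∑ x, μ x * ∑ y, g j x y * f j y :=
  rfl

theorem pairing_single (g : ∀ j, X → Y j → ℝ) (j : Fin d) (v : Y j → ℝ) :
    pairing μ g (Pi.single j v) = ∑ x, μ x * ∑ y, g j x y * v y := by
  rw [pairing_apply, sum_eq_single j (fun k _ hk => by simp [Pi.single_eq_of_ne hk])
    (by simp), Pi.single_eq_same]

theorem continuous_pairing (g : ∀ j, X → Y j → ℝ) : Continuous (pairing μ g) :=
  LinearMap.continuous_of_finiteDimensional _

theorem continuous_pairing_flip (f : ∀ j, Y j → ℝ) : Continuous ((pairing μ).flip f) :=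
  LinearMap.continuous_of_finiteDimensional _

theorem pairing_mono_right (hμ : 0 ≤ μ) {g : ∀ j, X → Y j → ℝ} (hg : 0 ≤ g)
    {f f' : ∀ j, Y j → ℝ} (hf : f ≤ f') : pairing μ g f ≤ pairing μ g f' := by
  simp only [pairing_apply]
  gcongr with j _ x _ y
  · exact hμ x
  · exact hg j x y
  · exact hf j y

theorem sum_le_mul_of_forall_testSet {N : ∀ j, Seminorm ℝ (Y j → ℝ)}
    (hdef : ∀ j f, N j f = 0 → f = 0) {g : ∀ j, X → Y j → ℝ} {c : ℝ}
    (hg : ∀ f ∈ testSet N, pairing μ g f ≤ c) (j : Fin d) {v : Y j → ℝ} (hv : 0 ≤ v) :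
    ∑ x, μ x * ∑ y, g j x y * v y ≤ c * N j v := by
  rcases (apply_nonneg (N j) v).eq_or_lt with h | h
  · simp [hdef j v h.symm]
  have hmem : Pi.single j ((N j v)⁻¹ • v) ∈ testSet N :=
    single_mem_testSet N (smul_nonneg (inv_nonneg.2 h.le) hv)
      (by rw [map_smul_eq_mul, Real.norm_of_nonneg (inv_nonneg.2 h.le), inv_mul_cancel₀ h.ne'])
  have := hg _ hmem
  rw [pairing_single] at this
  simp only [Pi.smul_apply, smul_eq_mul, mul_left_comm _ (N j v)⁻¹, ← mul_sum] at this
  rwa [← le_div_iff₀' (inv_pos.2 h), div_inv_eq_mul] at this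

theorem exists_mem_factorizations_eq_on_null {H : X → ℝ} (hH0 : 0 ≤ H)
    (hH : ∀ x y, M x ^ d * K x y ≤ H x ^ d)
    {g : ∀ j, X → Y j → ℝ} (hg : g ∈ factorizations M K) :
    ∃ g' ∈ factorizations M K, (∀ x, μ x = 0 → ∀ j y, g' j x y = H x) ∧
      pairing μ g' = pairing μ g := by
  classical
  refine ⟨fun j x y => if μ x = 0 then H x else g j x y, ⟨fun j x y => ?_, fun x y => ?_⟩,
    fun x hx j y => if_pos hx, ?_⟩
  · dsimp only
    split_ifs
    exacts [hH0 x, hg.1 j x y]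
  · by_cases hx : μ x = 0
    · simpa [hx] using hH x y
    · simpa [hx] using hg.2 x y
  · refine LinearMap.ext fun f => ?_
    simp only [pairing_apply]
    refine sum_congr rfl fun j _ => sum_congr rfl fun x _ => ?_
    by_cases hx : μ x = 0 <;> simp [hx]

theorem isCompact_normalized_sublevel (hμ : 0 ≤ μ) {N : ∀ j, Seminorm ℝ (Y j → ℝ)}
    (hdef : ∀ j f, N j f = 0 → f = 0) {H : X → ℝ} (hH0 : 0 ≤ H) (c : ℝ) :
    IsCompact {g | g ∈ factorizations M K ∧ (∀ x, μ x = 0 → ∀ j y, g j x y = H x) ∧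
      ∀ f ∈ testSet N, pairing μ g f ≤ c} := by
  classical
  have hnull : IsClosed {g : ∀ j, X → Y j → ℝ | ∀ x, μ x = 0 → ∀ j y, g j x y = H x} := by
    simp only [Set.ofPred_forall]
    exact isClosed_iInter fun x => isClosed_iInter fun _ => isClosed_iInter fun j =>
      isClosed_iInter fun y => isClosed_eq (by fun_prop) continuous_const
  have hsub : IsClosed {g : ∀ j, X → Y j → ℝ | ∀ f ∈ testSet N, pairing μ g f ≤ c} := by
    simp only [Set.ofPred_forall]
    exact isClosed_iInter fun f => isClosed_iInter fun _ =>
      isClosed_le (continuous_pairing_flip f) continuous_const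
  -- on the null set of `μ` the division below is `0`
  refine (isCompact_Icc (a := 0)
    (b := fun j x y => H x + c * N j (Pi.single y 1) / μ x)).of_isClosed_subset
    (isClosed_factorizations.inter (hnull.inter hsub)) fun g ⟨hg, hgH, hgc⟩ => ⟨hg.1, ?_⟩
  intro j x y
  show g j x y ≤ H x + c * N j (Pi.single y 1) / μ x
  rcases (show 0 ≤ μ x from hμ x).eq_or_lt with hx | hx
  · rw [hgH x hx.symm, ← hx, div_zero, add_zero]
  have hsingle := sum_le_mul_of_forall_testSet hdef hgc j (v := Pi.single y 1)
    (Pi.single_nonneg.2 zero_le_one)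
  simp only [Pi.single_apply, mul_ite, mul_one, mul_zero, sum_ite_eq', mem_univ, if_true]
    at hsingle
  have : μ x * g j x y ≤ c * N j (Pi.single y 1) :=
    (single_le_sum (f := fun x => μ x * g j x y) (fun x _ => mul_nonneg (hμ x) (hg.1 j x y))
      (mem_univ x)).trans hsingle
  exact ((le_div_iff₀' hx).2 this).trans (le_add_of_nonneg_left (hH0 x))

theorem exists_mem_factorizations_forall_pairing_le (hd : d ≠ 0) (hμ : 0 ≤ μ)
    {N : ∀ j, Seminorm ℝ (Y j → ℝ)} (hdef : ∀ j f, N j f = 0 → f = 0)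
    {c₀ : ℝ} (h : ∀ c, c₀ < c → ∃ g ∈ factorizations M K, ∀ f ∈ testSet N, pairing μ g f ≤ c) :
    ∃ g ∈ factorizations M K, ∀ f ∈ testSet N, pairing μ g f ≤ c₀ := by
  -- the pairing does not see `g` on the null set of `μ`; fixing it there makes sublevels compact
  choose H hH0 hH using fun x => exists_nonneg_forall_le_pow hd fun y : ∀ j, Y j => M x ^ d * K x y
  obtain ⟨g, hg⟩ := exists_forall_mem_of_monotone
    (S := fun c => {g | g ∈ factorizations M K ∧ (∀ x, μ x = 0 → ∀ j y, g j x y = H x) ∧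
      ∀ f ∈ testSet N, pairing μ g f ≤ c})
    (fun c c' hc g ⟨hg, hgH, hgc⟩ => ⟨hg, hgH, fun f hf => (hgc f hf).trans hc⟩)
    (fun c hc => by
      obtain ⟨g, hg, hgc⟩ := h c hc
      obtain ⟨g', hg', hg'H, hpair⟩ := exists_mem_factorizations_eq_on_null (μ := μ) hH0 hH hg
      exact ⟨g', hg', hg'H, by simpa [hpair] using hgc⟩)
    (isCompact_normalized_sublevel hμ hdef hH0)
  exact ⟨g, (hg _ (lt_add_one c₀)).1, fun f hf =>
    le_of_forall_gt_imp_ge_of_dense fun c hc => (hg c hc).2.2 f hf⟩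


theorem exists_mem_factorizations_pairing_le (hd : d ≠ 0) (hμ : 0 ≤ μ) (hK : 0 ≤ K) (hM : 0 ≤ M)
    {B : ℝ} (hB : 0 ≤ B) {u : ∀ j, Y j → ℝ} (hu : ∀ j y, 0 < u j y) {S : ∀ j, X → Y j → ℝ}
    (hS : 0 ≤ S) (hSK : ∀ x y, K x y ≤ ∏ j, S j x (y j))
    (hSB : ∀ x, ∏ j, ∑ y, S j x y * u j y ≤ B ^ d * kernelOp K u x) :
    ∃ g ∈ factorizations M K,
      pairing μ g u ≤ d * B * ∑ x, μ x * (M x * kernelOp K u x ^ (1 / (d : ℝ))) := by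
  choose t ht0 htK htsum using fun x =>
    exists_rescaling_sum_le_geomMean hd (S := fun j => S j x) (fun j y => hS j x y) hu (hSK x)
      (hM x)
  refine ⟨fun j x y => t x j * S j x y, ⟨fun j x y => mul_nonneg (ht0 x j) (hS j x y), htK⟩, ?_⟩
  have hT := kernelOp_nonneg hK fun j y => (hu j y).le
  have hgeom : ∀ x, (∏ j, ∑ y, S j x y * u j y) ^ (1 / (d : ℝ)) ≤
      B * kernelOp K u x ^ (1 / (d : ℝ)) := fun x => by
    calc _ ≤ (B ^ d * kernelOp K u x) ^ (1 / (d : ℝ)) :=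
          Real.rpow_le_rpow (prod_nonneg fun j _ => sum_nonneg fun y _ =>
            mul_nonneg (hS j x y) (hu j y).le) (hSB x) (by positivity)
      _ = B * kernelOp K u x ^ (1 / (d : ℝ)) := by
          rw [Real.mul_rpow (pow_nonneg hB d) (hT x), one_div, Real.pow_rpow_inv_natCast hB hd]
  calc pairing μ (fun j x y => t x j * S j x y) u
      = ∑ x, μ x * ∑ j, t x j * ∑ y, S j x y * u j y := by
        rw [pairing_apply, sum_comm]
        simp only [mul_sum, mul_assoc]
    _ ≤ ∑ x, μ x * (d * M x * (B * kernelOp K u x ^ (1 / (d : ℝ)))) := by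
        gcongr with x
        · exact hμ x
        · exact (htsum x).trans (mul_le_mul_of_nonneg_left (hgeom x)
            (mul_nonneg (Nat.cast_nonneg d) (hM x)))
    _ = d * B * ∑ x, μ x * (M x * kernelOp K u x ^ (1 / (d : ℝ))) := by
        rw [mul_sum]
        exact sum_congr rfl fun x _ => by ring

theorem exists_mem_factorizations_pairing_lt (hd : d ≠ 0) (hμ : 0 ≤ μ) (hK : 0 ≤ K) (hM : 0 ≤ M)
    {q : ℝ} (hq : 1 ≤ q) (hM1 : q = 1 → ∀ x, M x ≤ 1)
    (hMq : 1 < q → (∑ x, μ x * M x ^ (q / (q - 1))) ^ ((q - 1) / q) ≤ 1)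
    {N : ∀ j, Seminorm ℝ (Y j → ℝ)} {A B : ℝ} (hA : 0 ≤ A) (hB : 0 ≤ B)
    (hmain : ∀ f, 0 ≤ f →
      (∑ x, μ x * kernelOp K f x ^ (q / d)) ^ (1 / q) ≤ A * (∏ j, N j (f j)) ^ (1 / (d : ℝ)))
    (hstruct : ∀ f : ∀ j, Y j → ℝ, 0 ≤ f → ∃ S : ∀ j, X → Y j → ℝ, 0 ≤ S ∧
      (∀ x y, K x y ≤ ∏ j, S j x (y j)) ∧ ∀ x, ∏ j, ∑ y, S j x y * f j y ≤ B ^ d * kernelOp K f x)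
    {f : ∀ j, Y j → ℝ} (hf : f ∈ testSet N) {ε : ℝ} (hε : 0 < ε) :
    ∃ g ∈ factorizations M K, pairing μ g f < A * B + ε := by
  obtain ⟨hf0, hf1⟩ := hf
  set C := ∑ j, N j 1
  obtain ⟨η, hη, hηε⟩ := exists_pos_mul_lt hε (A * B * C)
  -- strictly positive, so that a vanishing `∑ y, S j x y * u j y` forces `S j x = 0`
  set u : ∀ j, Y j → ℝ := f + η • 1
  have hu : ∀ j y, 0 < u j y := fun j y => by
    simpa [u] using add_pos_of_nonneg_of_pos (hf0 j y) hη
  obtain ⟨S, hS, hSK, hSB⟩ := hstruct u fun j y => (hu j y).le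
  obtain ⟨g, hg, hgu⟩ := exists_mem_factorizations_pairing_le hd hμ hK hM hB hu hS hSK hSB
  have hT := kernelOp_nonneg hK fun j y => (hu j y).le
  have hNu : ∑ j, N j (u j) ≤ 1 + η * C := by
    calc ∑ j, N j (u j) ≤ ∑ j, (N j (f j) + η * N j 1) :=
          sum_le_sum fun j _ => (map_add_le_add _ _ _).trans_eq <| by
            rw [Pi.smul_apply, map_smul_eq_mul, Real.norm_of_nonneg hη.le]; rfl
      _ ≤ 1 + η * C := by rw [sum_add_distrib, ← mul_sum]; linarith
  refine ⟨g, hg, ?_⟩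
  calc pairing μ g f ≤ pairing μ g u :=
        pairing_mono_right hμ hg.1 (le_add_of_nonneg_right (smul_nonneg hη.le zero_le_one))
    _ ≤ d * B * ∑ x, μ x * (M x * kernelOp K u x ^ (1 / (d : ℝ))) := hgu
    _ ≤ d * B * (∑ x, μ x * kernelOp K u x ^ (q / d)) ^ (1 / q) := by
        gcongr
        simpa only [← Real.rpow_mul (hT _), one_div_mul_eq_div] using
          sum_mul_mul_le_rpow (v := fun x => kernelOp K u x ^ (1 / (d : ℝ))) hμ hM
            (fun x => Real.rpow_nonneg (hT x) _) hq hM1 hMq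
    _ ≤ d * B * (A * (∏ j, N j (u j)) ^ (1 / (d : ℝ))) := by
        gcongr
        exact hmain u fun j y => (hu j y).le
    _ ≤ d * B * (A * ((∑ j, N j (u j)) / d)) := by
        gcongr
        exact rpow_prod_le_sum_div hd fun j => apply_nonneg _ _
    _ = A * B * ∑ j, N j (u j) := by
        field_simp
    _ ≤ A * B * (1 + η * C) := by gcongr
    _ < A * B + ε := by linarith

end MultilinearDuality

open MultilinearDuality in
theorem multilinear_duality_general
    (d : ℕ) (hd : 1 ≤ d)
    (X : Type*) [Fintype X] (μ : X → ℝ) (hμ : ∀ x, 0 ≤ μ x)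
    (Y : Fin d → Type*) [∀ j, Fintype (Y j)]
    -- lattice norms on ℝ^{Y_j}
    (N : ∀ j, (Y j → ℝ) → ℝ)
    (hN_add : ∀ j f g, N j (f + g) ≤ N j f + N j g)
    (hN_smul : ∀ j (c : ℝ) f, N j (c • f) = |c| * N j f)
    (hN_defin : ∀ j f, N j f = 0 → f = 0)
    (hN_lattice : ∀ j f g, (∀ y, |f y| ≤ |g y|) → N j f ≤ N j g)
    -- nonnegative kernel and saturation
    (K : X → (∀ j, Y j) → ℝ) (hK : ∀ x y, 0 ≤ K x y)
    (q : ℝ) (hq : 1 ≤ q)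
    (A B : ℝ) (hA : 0 < A) (hB : 0 < B)
    -- (i) main hypothesis: ‖T(f₁,…,f_d)^{1/d}‖_{L^q(μ)} ≤ A (N₁(f₁)⋯N_d(f_d))^{1/d}
    (hmain : ∀ f : ∀ j, Y j → ℝ, (∀ j y, 0 ≤ f j y) →
      (∑ x, μ x * (∑ y : ∀ j, Y j, K x y * ∏ j, f j (y j)) ^ (q / d)) ^ (1 / q)
        ≤ A * (∏ j, N j (f j)) ^ (1 / (d : ℝ)))
    -- (ii) auxiliary structural hypothesis
    (hstruct : ∀ f : ∀ j, Y j → ℝ, (∀ j y, 0 ≤ f j y) →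
      ∃ S : ∀ j, X → Y j → ℝ,
        (∀ j x y, 0 ≤ S j x y) ∧
        (∀ x (y : ∀ j, Y j), K x y ≤ ∏ j, S j x (y j)) ∧
        (∀ x, (∏ j, ∑ y, S j x y * f j y) ≤
          B ^ d * ∑ y : ∀ j, Y j, K x y * ∏ j, f j (y j)))
    -- M nonnegative with ‖M‖_{ℓ^{q'}(μ)} ≤ 1 (q' the conjugate exponent, max-norm when q = 1)
    (M : X → ℝ) (hM0 : ∀ x, 0 ≤ M x)
    (hM1 : q = 1 → ∀ x, M x ≤ 1)
    (hMq : 1 < q → (∑ x, μ x * M x ^ (q / (q - 1))) ^ ((q - 1) / q) ≤ 1) :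
    ∃ g : ∀ j, X → Y j → ℝ,
      (∀ j x y, 0 ≤ g j x y) ∧
      (∀ x (y : ∀ j, Y j), M x ^ d * K x y ≤ ∏ j, g j x (y j)) ∧
      (∀ j (f : Y j → ℝ), (∀ y, 0 ≤ f y) →
        ∑ x, μ x * ∑ y, g j x y * f y ≤ A * B * N j f) := by
  have hd' : d ≠ 0 := Nat.one_le_iff_ne_zero.1 hd
  let p : ∀ j, Seminorm ℝ (Y j → ℝ) := fun j =>
    Seminorm.of (N j) (hN_add j) fun c f => by rw [hN_smul, Real.norm_eq_abs]
  have happrox : ∀ c, A * B < c →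
      ∃ g ∈ factorizations M K, ∀ f ∈ testSet p, pairing μ g f ≤ c := by
    intro c hc
    obtain ⟨g, hg, hgc⟩ := (pairing μ).exists_forall_lt_of_forall_exists_lt continuous_pairing
      continuous_pairing_flip ⟨0, zero_mem_testSet p⟩ (convex_testSet p)
      (isCompact_testSet p hN_lattice hN_defin) convex_factorizations fun f hf => by
        simpa using exists_mem_factorizations_pairing_lt (N := p) hd' hμ hK hM0 hq hM1 hMq hA.le
          hB.le hmain hstruct hf (sub_pos.2 hc)
    exact ⟨g, hg, fun f hf => (hgc f hf).le⟩
  obtain ⟨g, ⟨hg0, hgK⟩, hgAB⟩ :=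
    exists_mem_factorizations_forall_pairing_le hd' hμ hN_defin happrox
  exact ⟨g, fun j x y => hg0 j x y, hgK, fun j f hf =>
    sum_le_mul_of_forall_testSet hN_defin hgAB j hf⟩

theorem multilinear_duality
    (d : ℕ) (hd : 1 ≤ d)
    (X : Type*) [Fintype X] (μ : X → ℝ) (hμ : ∀ x, 0 ≤ μ x)
    (Y : Fin d → Type*) [∀ j, Fintype (Y j)]
    -- lattice norms on ℝ^{Y_j}
    (N : ∀ j, (Y j → ℝ) → ℝ)
    (hN_nonneg : ∀ j f, 0 ≤ N j f)
    (hN_add : ∀ j f g, N j (f + g) ≤ N j f + N j g)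
    (hN_smul : ∀ j (c : ℝ) f, N j (c • f) = |c| * N j f)
    (hN_defin : ∀ j f, N j f = 0 → f = 0)
    (hN_lattice : ∀ j f g, (∀ y, |f y| ≤ |g y|) → N j f ≤ N j g)
    -- nonnegative kernel and saturation
    (K : X → (∀ j, Y j) → ℝ) (hK : ∀ x y, 0 ≤ K x y)
    (hsat : ∀ x, 0 < μ x → ∃ y, K x y ≠ 0)
    (q : ℝ) (hq : 1 ≤ q)
    (A B : ℝ) (hA : 0 < A) (hB : 0 < B)
    -- (i) main hypothesis: ‖T(f₁,…,f_d)^{1/d}‖_{L^q(μ)} ≤ A (N₁(f₁)⋯N_d(f_d))^{1/d}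
    (hmain : ∀ f : ∀ j, Y j → ℝ, (∀ j y, 0 ≤ f j y) →
      (∑ x, μ x * (∑ y : ∀ j, Y j, K x y * ∏ j, f j (y j)) ^ (q / d)) ^ (1 / q)
        ≤ A * (∏ j, N j (f j)) ^ (1 / (d : ℝ)))
    -- (ii) auxiliary structural hypothesis
    (hstruct : ∀ f : ∀ j, Y j → ℝ, (∀ j y, 0 ≤ f j y) →
      ∃ S : ∀ j, X → Y j → ℝ,
        (∀ j x y, 0 ≤ S j x y) ∧
        (∀ x (y : ∀ j, Y j), K x y ≤ ∏ j, S j x (y j)) ∧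
        (∀ x, (∏ j, ∑ y, S j x y * f j y) ≤
          B ^ d * ∑ y : ∀ j, Y j, K x y * ∏ j, f j (y j)))
    -- M nonnegative with ‖M‖_{ℓ^{q'}(μ)} ≤ 1 (q' the conjugate exponent, max-norm when q = 1)
    (M : X → ℝ) (hM0 : ∀ x, 0 ≤ M x)
    (hM1 : q = 1 → ∀ x, M x ≤ 1)
    (hMq : 1 < q → (∑ x, μ x * M x ^ (q / (q - 1))) ^ ((q - 1) / q) ≤ 1) :
    ∃ g : ∀ j, X → Y j → ℝ,
      (∀ j x y, 0 ≤ g j x y) ∧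
      (∀ x (y : ∀ j, Y j), M x ^ d * K x y ≤ ∏ j, g j x (y j)) ∧
      (∀ j (f : Y j → ℝ), (∀ y, 0 ≤ f y) →
        ∑ x, μ x * ∑ y, g j x y * f y ≤ A * B * N j f) :=
  multilinear_duality_general d hd X μ hμ Y N hN_add hN_smul hN_defin hN_lattice K hK q hq A B hA hB
    hmain hstruct M hM0 hM1 hMq
end

section
/- Let X be a finite set with a weight μ : X → [0,∞), let Y be a finite set with a lattice norm N on ℝ^Y, let K : X × Y^d → [0,∞) be a kernel which is symmetric in its Y-arguments, with associated positive multilinear operator T, and suppose T saturates X. Let 1 ≤ q < ∞ with conjugate exponent q', and let A, B > 0. Assume: (i) for all nonnegative f ∈ ℝ^Y, ‖T(f,…,f)^{1/d}‖_{L^q(μ)} ≤ A·N(f); and (ii) for every nonnegative f ∈ ℝ^Y there exists S : X × Y → [0,∞) such that K(x,y_1,…,y_d) ≤ S(x,y_1)⋯S(x,y_d) for all x, y_1, …, y_d, and (Σ_{y∈Y} S(x,y) f(y))^d ≤ B^d · T(f,…,f)(x) for all x ∈ X. Then for every M : X → [0,∞) with ‖M‖_{ℓ^{q'}(μ)} ≤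 1 there exists a single kernel g : X × Y → [0,∞) such that M(x)^d K(x,y_1,…,y_d) ≤ g(x,y_1)⋯g(x,y_d) for all x, y_1, …, y_d, and for every nonnegative f ∈ ℝ^Y, Σ_{x∈X} μ(x) Σ_{y∈Y} g(x,y) f(y) ≤ A·B·N(f). -/
/-!
For a single test function `f`, hypothesis (ii) gives a majorant `S` of `K` with
`⟨S(x, ·), f⟩ ≤ B T(f, …, f)(x)^{1/d}`, so `g = M S` is a product majorant of `M^d K`, and
Hölder's inequality against `‖M‖_{ℓ^{q'}(μ)} ≤ 1` together with (i) gives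
`Σ_x μ(x) ⟨g(x, ·), f⟩ ≤ A B N(f)`.

Product majorants form a convex set (weighted AM–GM), so the vectors dominating some marginal
`Σ_x μ(x) g(x, ·)` form a closed convex upper set `P ⊆ ℝ^Y`. If no point of `P` served all `f`
at once, `P` could be separated from the compact convex set of nonnegative functionals dominated
by `A B N`. The separating functional is a nonnegative vector `h`, and because `N` is a lattice
norm some functional of that set attains `A B N(h)` at `h`; the test function `f = h` then gives
a contradiction.
-/

open Finset Matrix

section Holder

variable {X : Type*} [Fintype X]

theorem inner_le_weighted_Lp_mul_Lq_of_nonneg {w a b : X → ℝ} (hw : 0 ≤ w) (ha : 0 ≤ a)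
    (hb : 0 ≤ b) {p q : ℝ} (hpq : p.HolderConjugate q) :
    ∑ x, w x * (a x * b x) ≤
      (∑ x, w x * a x ^ p) ^ (1 / p) * (∑ x, w x * b x ^ q) ^ (1 / q) := by
  have hpow : ∀ {r : ℝ}, r ≠ 0 → ∀ c : X → ℝ, 0 ≤ c → ∀ x,
      (w x ^ (1 / r) * c x) ^ r = w x * c x ^ r :=
    fun hr c hc x => by
      rw [Real.mul_rpow (Real.rpow_nonneg (hw x) _) (hc x), ← Real.rpow_mul (hw x),
        one_div_mul_cancel hr, Real.rpow_one]
  have hsplit : ∀ x, w x * (a x * b x) = (w x ^ (1 / p) * a x) * (w x ^ (1 / q) * b x) :=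
    fun x => by
      rw [mul_mul_mul_comm, ← Real.rpow_add' (hw x) (by simp [hpq.inv_add_inv_eq_one]),
        one_div, one_div, hpq.inv_add_inv_eq_one, Real.rpow_one]
  simp_rw [hsplit, ← hpow hpq.ne_zero a ha, ← hpow hpq.symm.ne_zero b hb]
  exact Real.inner_le_Lp_mul_Lq_of_nonneg univ hpq
    (fun x _ => mul_nonneg (Real.rpow_nonneg (hw x) _) (ha x))
    (fun x _ => mul_nonneg (Real.rpow_nonneg (hw x) _) (hb x))

theorem sum_mul_mul_le_Lq_of_dual_le_one {w M F : X → ℝ} (hw : 0 ≤ w) (hM : 0 ≤ M)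
    (hF : 0 ≤ F) {q : ℝ} (hq : 1 ≤ q) (hM1 : q = 1 → ∀ x, M x ≤ 1)
    (hMq : 1 < q → (∑ x, w x * M x ^ (q / (q - 1))) ^ ((q - 1) / q) ≤ 1) :
    ∑ x, w x * (M x * F x) ≤ (∑ x, w x * F x ^ q) ^ (1 / q) := by
  rcases hq.eq_or_lt with rfl | hq
  · simp only [Real.rpow_one, div_one]
    exact Finset.sum_le_sum fun x _ =>
      mul_le_mul_of_nonneg_left (mul_le_of_le_one_left (hF x) (hM1 rfl x)) (hw x)
  have hconj : (q / (q - 1)).HolderConjugate q := (Real.HolderConjugate.conjExponent hq).symm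
  have hFq : 0 ≤ (∑ x, w x * F x ^ q) ^ (1 / q) :=
    Real.rpow_nonneg (sum_nonneg fun x _ => mul_nonneg (hw x) (Real.rpow_nonneg (hF x) q)) _
  calc ∑ x, w x * (M x * F x)
      ≤ (∑ x, w x * M x ^ (q / (q - 1))) ^ (1 / (q / (q - 1))) *
          (∑ x, w x * F x ^ q) ^ (1 / q) :=
        inner_le_weighted_Lp_mul_Lq_of_nonneg hw hM hF hconj
    _ ≤ 1 * (∑ x, w x * F x ^ q) ^ (1 / q) := by
        rw [one_div_div]
        exact mul_le_mul_of_nonneg_right (hMq hq) hFq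
    _ = (∑ x, w x * F x ^ q) ^ (1 / q) := one_mul _

end Holder

theorem le_mul_rpow_one_div_of_pow_le {s t B : ℝ} {d : ℕ} (hd : d ≠ 0) (hs : 0 ≤ s)
    (ht : 0 ≤ t) (hB : 0 ≤ B) (h : s ^ d ≤ B ^ d * t) : s ≤ B * t ^ (1 / d : ℝ) := by
  refine (pow_le_pow_iff_left₀ hs (by positivity) hd).1 ?_
  rwa [mul_pow, ← Real.rpow_natCast (t ^ _), ← Real.rpow_mul ht,
    one_div_mul_cancel (Nat.cast_ne_zero.2 hd), Real.rpow_one]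

theorem Seminorm.exists_dual_le_eq {E : Type*} [AddCommGroup E] [Module ℝ E]
    (p : Seminorm ℝ E) (x : E) :
    ∃ ψ : Module.Dual ℝ E, (∀ z, ψ z ≤ p z) ∧ ψ x = p x := by
  have H : ∀ c : ℝ, c • x = 0 → c • p x = 0 := fun c hc => by
    have := map_smul_eq_mul p c x
    rw [hc, map_zero, Real.norm_eq_abs] at this
    rcases eq_or_ne c 0 with rfl | hc0
    · simp
    · simp [(mul_eq_zero.1 this.symm).resolve_left (abs_ne_zero.2 hc0)]
  let f : E →ₗ.[ℝ] ℝ := LinearPMap.mkSpanSingleton' x (p x) H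
  obtain ⟨ψ, hψf, hψp⟩ := Module.Dual.exists_extension_of_le_seminorm_real f.domain f.toFun
    (p := p) fun ⟨z, hz⟩ => by
      obtain ⟨t, rfl⟩ := Submodule.mem_span_singleton.1 hz
      rw [map_smul_eq_mul, Real.norm_eq_abs]
      exact (LinearPMap.mkSpanSingleton'_apply x (p x) H t hz).trans_le
        (mul_le_mul_of_nonneg_right (le_abs_self t) (apply_nonneg p x))
  exact ⟨ψ, fun z => (le_abs_self _).trans (hψp z),
    (hψf ⟨x, Submodule.mem_span_singleton_self x⟩).trans
      (LinearPMap.mkSpanSingleton'_apply_self _ _ _ _)⟩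

section Duality

variable {Y : Type*} [Fintype Y]

def positiveDualBall (p : Seminorm ℝ (Y → ℝ)) : Set (Y → ℝ) :=
  {w | 0 ≤ w ∧ ∀ f, 0 ≤ f → w ⬝ᵥ f ≤ p f}

theorem isCompact_positiveDualBall (p : Seminorm ℝ (Y → ℝ)) :
    IsCompact (positiveDualBall p) := by
  classical
  refine (isCompact_Icc (a := 0) (b := fun y => p (Pi.single y 1))).of_isClosed_subset ?_
    fun w hw => ⟨hw.1, fun y => ?_⟩
  · simp only [positiveDualBall, Set.ofPred_and, Set.ofPred_forall]
    exact isClosed_Ici.inter (isClosed_iInter fun f => isClosed_iInter fun _ =>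
      isClosed_le (by fun_prop) continuous_const)
  · simpa using hw.2 (Pi.single y 1) (Pi.single_nonneg.2 zero_le_one)

theorem convex_positiveDualBall (p : Seminorm ℝ (Y → ℝ)) :
    Convex ℝ (positiveDualBall p) := by
  rintro w ⟨hw0, hw⟩ v ⟨hv0, hv⟩ a b ha hb hab
  refine ⟨by positivity, fun f hf => ?_⟩
  rw [add_dotProduct, smul_dotProduct, smul_dotProduct, smul_eq_mul, smul_eq_mul]
  calc a * (w ⬝ᵥ f) + b * (v ⬝ᵥ f) ≤ a * p f + b * p f := by
        gcongr
        exacts [hw f hf, hv f hf]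
    _ = p f := by rw [← add_mul, hab, one_mul]

/-- The positive part of a Hahn–Banach functional for `h` works, `p` being a lattice seminorm. -/
theorem exists_mem_positiveDualBall_le_dotProduct (p : Seminorm ℝ (Y → ℝ))
    (hp : ∀ f g : Y → ℝ, (∀ y, |f y| ≤ |g y|) → p f ≤ p g) {h : Y → ℝ} (hh : 0 ≤ h) :
    ∃ w ∈ positiveDualBall p, p h ≤ w ⬝ᵥ h := by
  classical
  obtain ⟨ψ, hψp, hψh⟩ := p.exists_dual_le_eq h
  obtain ⟨v, rfl⟩ := (dotProductEquiv ℝ Y).surjective ψ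
  simp only [dotProductEquiv_apply_apply] at hψp hψh
  refine ⟨v ⊔ 0, ⟨le_sup_right, fun f hf => ?_⟩, ?_⟩
  · have hvf : (v ⊔ 0) ⬝ᵥ f = v ⬝ᵥ fun y => if 0 ≤ v y then f y else 0 :=
      sum_congr rfl fun y _ => by by_cases hy : 0 ≤ v y <;> simp [hy, le_of_not_ge]
    refine hvf ▸ (hψp _).trans (hp _ _ fun y => ?_)
    split_ifs <;> simp
  · calc p h = v ⬝ᵥ h := hψh.symm
      _ ≤ (v ⊔ 0) ⬝ᵥ h := dotProduct_le_dotProduct_of_nonneg_right le_sup_left hh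

/-- A minimax principle, proved by separating `P` from `positiveDualBall p`. -/
theorem exists_mem_forall_dotProduct_le (p : Seminorm ℝ (Y → ℝ))
    (hp : ∀ f g : Y → ℝ, (∀ y, |f y| ≤ |g y|) → p f ≤ p g) {P : Set (Y → ℝ)}
    (hPc : Convex ℝ P) (hPcl : IsClosed P) (hPu : IsUpperSet P)
    (hP : ∀ f, 0 ≤ f → ∃ a ∈ P, a ⬝ᵥ f ≤ p f) : ∃ a ∈ P, ∀ f, 0 ≤ f → a ⬝ᵥ f ≤ p f := by
  classical
  by_contra! hcon
  have hdisj : Disjoint (positiveDualBall p) P := Set.disjoint_left.2 fun w hw hwP => by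
    obtain ⟨f, hf, hlt⟩ := hcon w hwP
    exact (hw.2 f hf).not_gt hlt
  obtain ⟨φ, u, v, hφW, huv, hφP⟩ := geometric_hahn_banach_compact_closed
    (convex_positiveDualBall p) (isCompact_positiveDualBall p) hPc hPcl hdisj
  obtain ⟨h, hφh⟩ := (dotProductEquiv ℝ Y).surjective φ.toLinearMap
  have hφ : ∀ z, φ z = z ⬝ᵥ h := fun z =>
    (LinearMap.congr_fun hφh z).symm.trans (dotProduct_comm _ _)
  obtain ⟨a₀, ha₀P, -⟩ := hP 0 le_rfl
  -- `φ` is bounded below on the upper set `P`, so it is nonnegative.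
  have hh : 0 ≤ h := fun y => by
    by_contra! hy
    have ht : 0 ≤ (φ a₀ - v) / -h y :=
      div_nonneg (sub_nonneg.2 (hφP a₀ ha₀P).le) (neg_nonneg.2 hy.le)
    have := hφP _ (hPu (le_add_of_nonneg_right
      (smul_nonneg ht (Pi.single_nonneg.2 zero_le_one))) ha₀P :
        a₀ + ((φ a₀ - v) / -h y) • Pi.single y 1 ∈ P)
    rw [map_add, map_smul, smul_eq_mul, hφ (Pi.single y 1), single_dotProduct, one_mul,
      div_mul_eq_mul_div, div_neg, mul_div_cancel_right₀ _ hy.ne] at this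
    linarith
  obtain ⟨w, hwW, hpw⟩ := exists_mem_positiveDualBall_le_dotProduct p hp hh
  obtain ⟨a, haP, hah⟩ := hP h hh
  have := calc a ⬝ᵥ h ≤ p h := hah
    _ ≤ w ⬝ᵥ h := hpw
    _ = φ w := (hφ w).symm
    _ < v := (hφW w hwW).trans huv
    _ < φ a := hφP a haP
  exact lt_irrefl _ (this.trans_eq (hφ a))

end Duality

theorem Convex.upperClosure {E : Type*} [AddCommGroup E] [PartialOrder E]
    [IsOrderedAddMonoid E] [Module ℝ E] [PosSMulMono ℝ E] {s : Set E} (hs : Convex ℝ s) :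
    Convex ℝ (upperClosure s : Set E) := by
  rintro a ⟨a', ha's, ha'a⟩ b ⟨b', hb's, hb'b⟩ r t hr ht hrt
  exact ⟨r • a' + t • b', hs ha's hb's hr ht hrt, by gcongr⟩

section Majorants

variable {ι Y : Type*} [Fintype ι]

def productMajorants (c : (ι → Y) → ℝ) : Set (Y → ℝ) :=
  {v | 0 ≤ v ∧ ∀ y, c y ≤ ∏ j, v (y j)}

theorem isClosed_productMajorants (c : (ι → Y) → ℝ) : IsClosed (productMajorants c) := by
  simp only [productMajorants, Set.ofPred_and, Set.ofPred_forall]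
  exact isClosed_Ici.inter (isClosed_iInter fun y => isClosed_le continuous_const (by fun_prop))

theorem convex_productMajorants {c : (ι → Y) → ℝ} (hc : 0 ≤ c) :
    Convex ℝ (productMajorants c) := by
  rintro u ⟨hu0, hu⟩ v ⟨hv0, hv⟩ a b ha hb hab
  refine ⟨by positivity, fun y => ?_⟩
  calc c y = c y ^ a * c y ^ b := by
        rw [← Real.rpow_add' (hc y) (by rw [hab]; exact one_ne_zero), hab, Real.rpow_one]
    _ ≤ (∏ j, u (y j)) ^ a * (∏ j, v (y j)) ^ b := by
        have := prod_nonneg fun j (_ : j ∈ univ) => hu0 (y j)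
        exact mul_le_mul (Real.rpow_le_rpow (hc y) (hu y) ha)
          (Real.rpow_le_rpow (hc y) (hv y) hb) (Real.rpow_nonneg (hc y) b) (Real.rpow_nonneg this a)
    _ = ∏ j, u (y j) ^ a * v (y j) ^ b := by
        rw [← Real.finsetProd_rpow _ _ (fun j _ => hu0 _) a,
          ← Real.finsetProd_rpow _ _ (fun j _ => hv0 _) b, ← Finset.prod_mul_distrib]
    _ ≤ ∏ j, (a • u + b • v) (y j) := by
        refine Finset.prod_le_prod (fun j _ =>
          mul_nonneg (Real.rpow_nonneg (hu0 _) a) (Real.rpow_nonneg (hv0 _) b))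
          fun j _ => Real.geom_mean_le_arith_mean2_weighted ha hb (hu0 _) (hv0 _) hab

theorem smul_mem_productMajorants {c : (ι → Y) → ℝ} {v : Y → ℝ}
    (hv : v ∈ productMajorants c) {m : ℝ} (hm : 0 ≤ m) :
    m • v ∈ productMajorants (m ^ Fintype.card ι • c) := by
  refine ⟨smul_nonneg hm hv.1, fun y => ?_⟩
  simp only [Pi.smul_apply, smul_eq_mul, Finset.prod_mul_distrib, Finset.prod_const,
    Finset.card_univ]
  exact mul_le_mul_of_nonneg_left (hv.2 y) (by positivity)

end Majorants

section WeightedSum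

variable {X Y : Type*} [Fintype X]

def weightedSum (μ : X → ℝ) : (X → Y → ℝ) →ₗ[ℝ] Y → ℝ :=
  ∑ x, μ x • LinearMap.proj x

@[simp]
theorem weightedSum_apply (μ : X → ℝ) (g : X → Y → ℝ) :
    weightedSum μ g = ∑ x, μ x • g x := by
  simp [weightedSum]

variable [Fintype Y]

theorem weightedSum_dotProduct (μ : X → ℝ) (g : X → Y → ℝ) (f : Y → ℝ) :
    weightedSum μ g ⬝ᵥ f = ∑ x, μ x * (g x ⬝ᵥ f) := by
  simp [sum_dotProduct, smul_dotProduct]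

theorem isCompact_pi_inter_setOf_weightedSum_le {μ : X → ℝ} (hμ : 0 ≤ μ)
    {C : X → Set (Y → ℝ)} (hC : ∀ x, IsClosed (C x)) (hC0 : ∀ x, C x ⊆ Set.Ici 0)
    (g₀ : X → Y → ℝ) (R : Y → ℝ) :
    IsCompact (Set.univ.pi C ∩ {g | ∀ x, μ x = 0 → g x = g₀ x} ∩
      {g | weightedSum μ g ≤ R}) := by
  classical
  refine (isCompact_Icc (a := 0)
    (b := fun x y => if μ x = 0 then g₀ x y else R y / μ x)).of_isClosed_subset ?_ ?_
  · refine ((isClosed_set_pi fun x _ => hC x).inter ?_).inter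
      (isClosed_le (weightedSum μ).continuous_of_finiteDimensional continuous_const)
    simp only [Set.ofPred_forall]
    exact isClosed_iInter fun x => isClosed_iInter fun _ =>
      isClosed_eq (continuous_apply x) continuous_const
  rintro g ⟨⟨hgC, hg₀g⟩, hgR⟩
  refine ⟨fun x => hC0 x (hgC x trivial), fun x y => ?_⟩
  by_cases hx : μ x = 0
  · simp [hx, hg₀g x hx]
  have hle : μ x * g x y ≤ R y := by
    refine le_trans ?_ (hgR y)
    simpa using single_le_sum (f := fun x' => μ x' * g x' y)
      (fun x' _ => mul_nonneg (hμ x') (hC0 x' (hgC x' trivial) y)) (Finset.mem_univ x)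
  simpa [hx, le_div_iff₀ ((hμ x).lt_of_ne' hx), mul_comm] using hle

theorem isClosed_upperClosure_weightedSum_image {μ : X → ℝ} (hμ : 0 ≤ μ)
    {C : X → Set (Y → ℝ)} (hC : ∀ x, IsClosed (C x)) (hC0 : ∀ x, C x ⊆ Set.Ici 0) :
    IsClosed (upperClosure (weightedSum μ '' Set.univ.pi C) : Set (Y → ℝ)) := by
  classical
  rcases (Set.univ.pi C).eq_empty_or_nonempty with hCe | ⟨g₀, hg₀⟩
  · simp [hCe]
  refine isClosed_of_closure_subset fun a ha => ?_
  -- Near `a` only a compact set of `g` matters: those bounded by `a + 1` where `μ > 0`,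
  -- frozen to `g₀` where `μ = 0`.
  set K := Set.univ.pi C ∩ {g | ∀ x, μ x = 0 → g x = g₀ x} ∩
    {g | weightedSum μ g ≤ a + 1}
  have hK : IsCompact K := isCompact_pi_inter_setOf_weightedSum_le hμ hC hC0 g₀ (a + 1)
  let U : Set (Y → ℝ) := Set.univ.pi fun y => Set.Iio (a y + 1)
  have hU : IsOpen U := isOpen_set_pi Set.finite_univ fun _ _ => isOpen_Iio
  have hUK : U ∩ upperClosure (weightedSum μ '' Set.univ.pi C) ⊆
      upperClosure (weightedSum μ '' K) := by
    rintro b ⟨hbU, _, ⟨g, hg, rfl⟩, hgb⟩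
    let g' : X → Y → ℝ := fun x => if μ x = 0 then g₀ x else g x
    have hg' : weightedSum μ g' = weightedSum μ g := by
      simp only [weightedSum_apply, g']
      exact sum_congr rfl fun x _ => by split_ifs with hx <;> simp [hx]
    refine ⟨weightedSum μ g', ⟨g', ⟨⟨fun x _ => ?_, fun x hx => if_pos hx⟩, ?_⟩, rfl⟩,
      hg'.le.trans hgb⟩
    · by_cases hx : μ x = 0 <;> simp [g', hx, hg x trivial, hg₀ x trivial]
    · show weightedSum μ g' ≤ a + 1
      exact hg' ▸ fun y => (hgb y).trans (hbU y trivial).le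
  have hKcl : IsClosed (upperClosure (weightedSum μ '' K) : Set (Y → ℝ)) := by
    refine (hK.image (weightedSum μ).continuous_of_finiteDimensional).isClosed.upperClosure_pi
      ⟨0, ?_⟩
    rintro _ ⟨g, hg, rfl⟩
    simpa using sum_nonneg fun x _ => smul_nonneg (hμ x) (hC0 x (hg.1.1 x trivial))
  have haU : a ∈ U := fun y _ => lt_add_one (a y)
  exact upperClosure_anti (Set.image_mono (Set.inter_subset_left.trans Set.inter_subset_left))
    (closure_minimal hUK hKcl (hU.inter_closure ⟨haU, ha⟩))

end WeightedSum

section Kernel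

variable {X Y ι : Type*} [Fintype Y] [Fintype ι] [DecidableEq ι]

/-- `T(f, …, f)` in the notation of the paper. -/
def multilinearDiag (K : X → (ι → Y) → ℝ) (f : Y → ℝ) (x : X) : ℝ :=
  ∑ y : ι → Y, K x y * ∏ j, f (y j)

theorem multilinearDiag_nonneg {K : X → (ι → Y) → ℝ} (hK : 0 ≤ K) {f : Y → ℝ}
    (hf : 0 ≤ f) : 0 ≤ multilinearDiag K f :=
  fun x => sum_nonneg fun y _ => mul_nonneg (hK x y) (prod_nonneg fun _ _ => hf _)

theorem exists_mem_pi_productMajorants_dotProduct_le [Fintype X] {d : ℕ} (hd : d ≠ 0)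
    {μ M : X → ℝ} (hμ : 0 ≤ μ) (hM : 0 ≤ M) {q : ℝ} (hq : 1 ≤ q) (hM1 : q = 1 → ∀ x, M x ≤ 1)
    (hMq : 1 < q → (∑ x, μ x * M x ^ (q / (q - 1))) ^ ((q - 1) / q) ≤ 1)
    {K : X → (Fin d → Y) → ℝ} (hK : 0 ≤ K) {f : Y → ℝ} (hf : 0 ≤ f) {S : X → Y → ℝ}
    (hS : ∀ x, S x ∈ productMajorants (K x)) {B : ℝ} (hB : 0 ≤ B)
    (hSB : ∀ x, (S x ⬝ᵥ f) ^ d ≤ B ^ d * multilinearDiag K f x) :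
    ∃ g ∈ Set.univ.pi fun x => productMajorants (M x ^ d • K x),
      weightedSum μ g ⬝ᵥ f ≤
        B * (∑ x, μ x * multilinearDiag K f x ^ (q / d)) ^ (1 / q) := by
  set T := multilinearDiag K f
  have hT := multilinearDiag_nonneg hK hf
  refine ⟨fun x => M x • S x, fun x _ => by
    simpa using smul_mem_productMajorants (hS x) (hM x), ?_⟩
  have hroot : ∀ x, S x ⬝ᵥ f ≤ B * T x ^ (1 / d : ℝ) := fun x =>
    le_mul_rpow_one_div_of_pow_le hd (dotProduct_nonneg_of_nonneg (hS x).1 hf) (hT x) hB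
      (hSB x)
  have hpow : ∀ x, (T x ^ (1 / d : ℝ)) ^ q = T x ^ (q / d) := fun x => by
    rw [← Real.rpow_mul (hT x), one_div_mul_eq_div]
  calc weightedSum μ (fun x => M x • S x) ⬝ᵥ f
        = ∑ x, μ x * (M x * (S x ⬝ᵥ f)) := by
        simp only [weightedSum_dotProduct, smul_dotProduct, smul_eq_mul]
    _ ≤ ∑ x, μ x * (M x * (B * T x ^ (1 / d : ℝ))) := by
        gcongr with x
        exacts [hμ x, hM x, hroot x]
    _ = B * ∑ x, μ x * (M x * T x ^ (1 / d : ℝ)) := by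
        rw [mul_sum]
        exact sum_congr rfl fun x _ => by ring
    _ ≤ B * (∑ x, μ x * T x ^ (q / d)) ^ (1 / q) := by
        simp_rw [← hpow]
        exact mul_le_mul_of_nonneg_left (sum_mul_mul_le_Lq_of_dual_le_one hμ hM
          (fun x => Real.rpow_nonneg (hT x) _) hq hM1 hMq) hB

end Kernel

theorem multilinear_duality_symmetric_general
    (d : ℕ) (hd : 1 ≤ d)
    (X : Type*) [Fintype X] (μ : X → ℝ) (hμ : ∀ x, 0 ≤ μ x)
    (Y : Type*) [Fintype Y]
    -- lattice norm on ℝ^Y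
    (N : (Y → ℝ) → ℝ)
    (hN_add : ∀ f g, N (f + g) ≤ N f + N g)
    (hN_smul : ∀ (c : ℝ) f, N (c • f) = |c| * N f)
    (hN_lattice : ∀ f g, (∀ y, |f y| ≤ |g y|) → N f ≤ N g)
    (K : X → (Fin d → Y) → ℝ) (hK : ∀ x y, 0 ≤ K x y)
    (q : ℝ) (hq : 1 ≤ q)
    (A B : ℝ) (hA : 0 < A) (hB : 0 < B)
    -- (i) diagonal main hypothesis: ‖T(f,…,f)^{1/d}‖_{L^q(μ)} ≤ A N(f)
    (hmain : ∀ f : Y → ℝ, (∀ y, 0 ≤ f y) →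
      (∑ x, μ x * (∑ y : Fin d → Y, K x y * ∏ j, f (y j)) ^ (q / d)) ^ (1 / q)
        ≤ A * N f)
    -- (ii) auxiliary structural hypothesis (symmetric version)
    (hstruct : ∀ f : Y → ℝ, (∀ y, 0 ≤ f y) →
      ∃ S : X → Y → ℝ,
        (∀ x y, 0 ≤ S x y) ∧
        (∀ x (y : Fin d → Y), K x y ≤ ∏ j, S x (y j)) ∧
        (∀ x, (∑ y, S x y * f y) ^ d ≤
          B ^ d * ∑ y : Fin d → Y, K x y * ∏ j, f (y j)))
    -- M nonnegative with ‖M‖_{ℓ^{q'}(μ)} ≤ 1 (q' the conjugate exponent, max-norm when q = 1)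
    (M : X → ℝ) (hM0 : ∀ x, 0 ≤ M x)
    (hM1 : q = 1 → ∀ x, M x ≤ 1)
    (hMq : 1 < q → (∑ x, μ x * M x ^ (q / (q - 1))) ^ ((q - 1) / q) ≤ 1) :
    ∃ g : X → Y → ℝ,
      (∀ x y, 0 ≤ g x y) ∧
      (∀ x (y : Fin d → Y), M x ^ d * K x y ≤ ∏ j, g x (y j)) ∧
      (∀ f : Y → ℝ, (∀ y, 0 ≤ f y) →
        ∑ x, μ x * ∑ y, g x y * f y ≤ A * B * N f) := by
  classical
  have hAB : 0 ≤ A * B := by positivity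
  let p : Seminorm ℝ (Y → ℝ) := Seminorm.of (fun f => A * B * N f)
    (fun f g => by rw [← mul_add]; exact mul_le_mul_of_nonneg_left (hN_add f g) hAB)
    (fun c f => by rw [hN_smul, Real.norm_eq_abs]; ring)
  have hp : ∀ f g : Y → ℝ, (∀ y, |f y| ≤ |g y|) → p f ≤ p g :=
    fun f g hfg => mul_le_mul_of_nonneg_left (hN_lattice f g hfg) hAB
  set G := Set.univ.pi fun x => productMajorants (M x ^ d • K x)
  have hPc : Convex ℝ (upperClosure (weightedSum μ '' G) : Set (Y → ℝ)) :=
    ((convex_pi fun x _ => convex_productMajorants fun y =>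
      mul_nonneg (pow_nonneg (hM0 x) d) (hK x y)).linear_image _).upperClosure
  have hPcl : IsClosed (upperClosure (weightedSum μ '' G) : Set (Y → ℝ)) :=
    isClosed_upperClosure_weightedSum_image hμ (fun _ => isClosed_productMajorants _)
      fun _ _ hv => hv.1
  have hP : ∀ f, 0 ≤ f → ∃ a ∈ upperClosure (weightedSum μ '' G), a ⬝ᵥ f ≤ p f := by
    intro f hf
    obtain ⟨S, hS0, hSK, hSB⟩ := hstruct f hf
    obtain ⟨g, hg, hgf⟩ := exists_mem_pi_productMajorants_dotProduct_le (by omega) hμ hM0 hq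
      hM1 hMq hK hf (S := S) (fun x => ⟨hS0 x, hSK x⟩) hB.le hSB
    refine ⟨_, subset_upperClosure ⟨g, hg, rfl⟩, hgf.trans ?_⟩
    calc B * _ ≤ B * (A * N f) := mul_le_mul_of_nonneg_left (hmain f hf) hB.le
      _ = A * B * N f := by ring
  obtain ⟨a, ⟨_, ⟨g, hg, rfl⟩, hga⟩, ha⟩ :=
    exists_mem_forall_dotProduct_le p hp hPc hPcl (upperClosure _).upper hP
  refine ⟨g, fun x y => (hg x trivial).1 y, fun x y => (hg x trivial).2 y, fun f hf => ?_⟩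
  calc ∑ x, μ x * ∑ y, g x y * f y = weightedSum μ g ⬝ᵥ f := (weightedSum_dotProduct μ g f).symm
    _ ≤ a ⬝ᵥ f := dotProduct_le_dotProduct_of_nonneg_right hga hf
    _ ≤ A * B * N f := ha f hf

theorem multilinear_duality_symmetric
    (d : ℕ) (hd : 1 ≤ d)
    (X : Type*) [Fintype X] (μ : X → ℝ) (hμ : ∀ x, 0 ≤ μ x)
    (Y : Type*) [Fintype Y]
    -- lattice norm on ℝ^Y
    (N : (Y → ℝ) → ℝ)
    (hN_nonneg : ∀ f, 0 ≤ N f)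
    (hN_add : ∀ f g, N (f + g) ≤ N f + N g)
    (hN_smul : ∀ (c : ℝ) f, N (c • f) = |c| * N f)
    (hN_defin : ∀ f, N f = 0 → f = 0)
    (hN_lattice : ∀ f g, (∀ y, |f y| ≤ |g y|) → N f ≤ N g)
    -- nonnegative kernel, symmetric in its Y-arguments, and saturation
    (K : X → (Fin d → Y) → ℝ) (hK : ∀ x y, 0 ≤ K x y)
    (hsym : ∀ x (y : Fin d → Y) (σ : Equiv.Perm (Fin d)), K x (y ∘ σ) = K x y)
    (hsat : ∀ x, 0 < μ x → ∃ y, K x y ≠ 0)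
    (q : ℝ) (hq : 1 ≤ q)
    (A B : ℝ) (hA : 0 < A) (hB : 0 < B)
    -- (i) diagonal main hypothesis: ‖T(f,…,f)^{1/d}‖_{L^q(μ)} ≤ A N(f)
    (hmain : ∀ f : Y → ℝ, (∀ y, 0 ≤ f y) →
      (∑ x, μ x * (∑ y : Fin d → Y, K x y * ∏ j, f (y j)) ^ (q / d)) ^ (1 / q)
        ≤ A * N f)
    -- (ii) auxiliary structural hypothesis (symmetric version)
    (hstruct : ∀ f : Y → ℝ, (∀ y, 0 ≤ f y) →
      ∃ S : X → Y → ℝ,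
        (∀ x y, 0 ≤ S x y) ∧
        (∀ x (y : Fin d → Y), K x y ≤ ∏ j, S x (y j)) ∧
        (∀ x, (∑ y, S x y * f y) ^ d ≤
          B ^ d * ∑ y : Fin d → Y, K x y * ∏ j, f (y j)))
    -- M nonnegative with ‖M‖_{ℓ^{q'}(μ)} ≤ 1 (q' the conjugate exponent, max-norm when q = 1)
    (M : X → ℝ) (hM0 : ∀ x, 0 ≤ M x)
    (hM1 : q = 1 → ∀ x, M x ≤ 1)
    (hMq : 1 < q → (∑ x, μ x * M x ^ (q / (q - 1))) ^ ((q - 1) / q) ≤ 1) :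
    ∃ g : X → Y → ℝ,
      (∀ x y, 0 ≤ g x y) ∧
      (∀ x (y : Fin d → Y), M x ^ d * K x y ≤ ∏ j, g x (y j)) ∧
      (∀ f : Y → ℝ, (∀ y, 0 ≤ f y) →
        ∑ x, μ x * ∑ y, g x y * f y ≤ A * B * N f) :=
  multilinear_duality_symmetric_general d hd X μ hμ Y N hN_add hN_smul hN_lattice K hK q hq A B hA
    hB hmain hstruct M hM0 hM1 hMq
end

section
/- Let 𝔽 be a field, let V be a finite-dimensional vector space over 𝔽, and let f : L_0(V) → [0,∞) be finitely supported, where L_0(V) is the set of one-dimensional linear subspaces of V. Let W_0 ⊊ π ⊊ W_1 be linear subspaces of V, and let a, b be reals with 0 < b < a. If Σ_{l ⊆ W_1, l ⊄ W_0} f(l) > a · Σ_{l ⊄ W_1} f(l) (heaviness of W_1 over W_0) and Σ_{l ⊆ π, l ⊄ W_0} f(l) ≤ b · Σ_{l ⊄ π} f(l) (lightness of π), then Σ_{l ⊆ π, l ⊄ W_0} f(l) ≤ (b(a+1)/(a−b)) · Σ_{l ⊆ W_1, l ⊄ π} f(l), where all sums range over l ∈ L_0(V) subject to the stated containment conditions.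 -/
/- STATEMENT 8: The improved lightness lemma (Lemma 1, `lemma:improved_lightness`,
   of the paper, in quantitative form). -/

open Classical in
theorem improved_lightness
    (𝔽 : Type*) [Field 𝔽] (V : Type*) [AddCommGroup V] [Module 𝔽 V]
    [FiniteDimensional 𝔽 V]
    (f : {W : Submodule 𝔽 V // Module.finrank 𝔽 W = 1} → ℝ)
    (hf0 : ∀ l, 0 ≤ f l) (hfs : (Function.support f).Finite)
    (W₀ π W₁ : Submodule 𝔽 V) (h0π : W₀ < π) (hπ1 : π < W₁)
    (a b : ℝ) (hb : 0 < b) (hba : b < a)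
    -- heaviness of W₁ over W₀
    (heavy : a * (∑ l ∈ hfs.toFinset, if ¬ l.1 ≤ W₁ then f l else 0) <
      ∑ l ∈ hfs.toFinset, if l.1 ≤ W₁ ∧ ¬ l.1 ≤ W₀ then f l else 0)
    -- lightness of π
    (light : (∑ l ∈ hfs.toFinset, if l.1 ≤ π ∧ ¬ l.1 ≤ W₀ then f l else 0) ≤
      b * ∑ l ∈ hfs.toFinset, if ¬ l.1 ≤ π then f l else 0) :
    (∑ l ∈ hfs.toFinset, if l.1 ≤ π ∧ ¬ l.1 ≤ W₀ then f l else 0) ≤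
      b * (a + 1) / (a - b) *
        ∑ l ∈ hfs.toFinset, if l.1 ≤ W₁ ∧ ¬ l.1 ≤ π then f l else 0 := by

  set S := ∑ l ∈ hfs.toFinset, if l.1 ≤ π ∧ ¬ l.1 ≤ W₀ then f l else 0 with hS
  set X := ∑ l ∈ hfs.toFinset, if l.1 ≤ W₁ ∧ ¬ l.1 ≤ π then f l else 0 with hX
  set U := ∑ l ∈ hfs.toFinset, if ¬ l.1 ≤ W₁ then f l else 0 with hU
  have hT : (∑ l ∈ hfs.toFinset, if ¬ l.1 ≤ π then f l else 0) = U + X := by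
    rw [hU, hX, ← Finset.sum_add_distrib]
    refine Finset.sum_congr rfl fun l _ => ?_
    by_cases h2 : l.1 ≤ π
    · have h1 : l.1 ≤ W₁ := h2.trans hπ1.le
      simp [h1, h2]
    · by_cases h1 : l.1 ≤ W₁ <;> simp [h1, h2]
  have hH : (∑ l ∈ hfs.toFinset, if l.1 ≤ W₁ ∧ ¬ l.1 ≤ W₀ then f l else 0) = S + X := by
    rw [hS, hX, ← Finset.sum_add_distrib]
    refine Finset.sum_congr rfl fun l _ => ?_
    by_cases h2 : l.1 ≤ π
    · have h1 : l.1 ≤ W₁ := h2.trans hπ1.le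
      simp [h1, h2]
    · have hW0 : ¬ l.1 ≤ W₀ := fun h => h2 (h.trans h0π.le)
      by_cases h1 : l.1 ≤ W₁ <;> simp [h1, h2, hW0]
  rw [hH] at heavy
  rw [hT] at light
  have hSnn : 0 ≤ S := Finset.sum_nonneg fun l _ => by split_ifs <;> first | exact hf0 l | exact le_rfl
  have hXnn : 0 ≤ X := Finset.sum_nonneg fun l _ => by split_ifs <;> first | exact hf0 l | exact le_rfl
  have hUnn : 0 ≤ U := Finset.sum_nonneg fun l _ => by split_ifs <;> first | exact hf0 l | exact le_rfl
  rw [div_mul_eq_mul_div, le_div_iff₀ (by linarith)]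
  nlinarith [mul_lt_mul_of_pos_left heavy hb, mul_le_mul_of_nonneg_left light (by linarith : (0:ℝ) ≤ a)]
end

section
/- For every integer r ≥ 1 and real C ≥ 0 there is a constant β (depending only on r and C) with the following property. Let 𝔽 be a field, let Π_0 ⊊ Π_1 be linear subspaces of 𝔽^d with dim Π_0 = k and dim Π_1 = k + r, let Δ be the set of lines through the origin contained in Π_1 but not contained in Π_0, and let f : L_0 → [0,∞) be finitely supported, where L_0 is the set of lines through the origin in 𝔽^d. Suppose that for every linear subspace π with Π_0 ⊊ π ⊊ Π_1 one has Σ_{l ⊆ π, l ⊄ Π_0} f(l) ≤ C · Σ_{l ⊆ Π_1, l ⊄ π} f(l). Then (Σ_{l∈Δ} f(l))^r ≤ β · Σ_{(l_1,…,l_r)∈Δ^r} δ_{Π_0,Π_1}(l_1,…,l_r) f(l_1)⋯f(l_r), where δ_{Π_0,Π_1}(l_1,…,l_r) = 1 if the span of Π_0 together with l_1, …, l_r has dimension k + r, and 0 otherwise. -/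
open scoped NNReal ENNReal

/-- A line through the origin in `𝔽^d`: a one-dimensional linear subspace. -/
def LineO (𝔽 : Type*) [Field 𝔽] (d : ℕ) : Type _ :=
  {W : Submodule 𝔽 (Fin d → 𝔽) // Module.finrank 𝔽 W = 1}

/-!
Induction on the codimension `r`, from `r = 0` where both sides are `1`. Expand
`S^(r+1) = ∑_{l₁ ∈ Δ} f(l₁) S^r`. For `l₁ ∈ Δ` and `r ≥ 1` the subspace `π = Π₀ ⊔ l₁` lies
strictly between `Π₀` and `Π₁`, and splitting `Δ` at `π` and applying lightness gives
`S ≤ (C + 1) T`, where `T` is the mass of the lines of `Π₁` not in `π`. The pair `(π, Π₁)` has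
codimension `r` and inherits lightness, so by induction `T^r` is controlled by the generic
`r`-tuples over `π`; prepending `l₁` to such a tuple gives a generic `(r + 1)`-tuple over `Π₀`,
injectively. The constant is `β_r = (C + 1)^(r choose 2)`.
-/

open Module

namespace Submodule

variable {𝔽 V : Type*} [Field 𝔽] [AddCommGroup V] [Module 𝔽 V]

local notation "𝕃" => {l : Submodule 𝔽 V // finrank 𝔽 l = 1}

variable (f : {l : Submodule 𝔽 V // finrank 𝔽 l = 1} → ℝ≥0∞)

theorem finrank_sup_of_finrank_eq_one [FiniteDimensional 𝔽 V] {P l : Submodule 𝔽 V}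
    (hl : finrank 𝔽 l = 1) (hlP : ¬ l ≤ P) : finrank 𝔽 ↥(P ⊔ l) = finrank 𝔽 P + 1 := by
  have hinf : P ⊓ l = ⊥ := by
    have hlt : P ⊓ l < l := inf_le_right.lt_of_ne fun h => hlP (h ▸ inf_le_left)
    have := finrank_lt_finrank_of_lt hlt
    exact finrank_eq_zero.mp (by omega)
  have := finrank_sup_add_finrank_inf_eq P l
  rw [hinf, finrank_bot, hl] at this
  omega

noncomputable def layerMass (A B : Submodule 𝔽 V) : ℝ≥0∞ :=
  ∑' l : {l : 𝕃 // l.1 ≤ B ∧ ¬ l.1 ≤ A}, f l.1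

/-- In the paper's notation: `t ∈ Δ^r` and `δ_{A,B}(t) = 1`. -/
def IsGenericTuple (A B : Submodule 𝔽 V) {r : ℕ} (t : Fin r → 𝕃) : Prop :=
  (∀ i, (t i).1 ≤ B ∧ ¬ (t i).1 ≤ A) ∧ finrank 𝔽 ↥(A ⊔ ⨆ i, (t i).1) = finrank 𝔽 A + r

noncomputable def genericTupleMass (A B : Submodule 𝔽 V) (r : ℕ) : ℝ≥0∞ :=
  ∑' t : {t : Fin r → 𝕃 // IsGenericTuple A B t}, ∏ i, f (t.1 i)

theorem genericTupleMass_zero (A B : Submodule 𝔽 V) : genericTupleMass f A B 0 = 1 := by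
  have : Unique {t : Fin 0 → 𝕃 // IsGenericTuple A B t} :=
    { default := ⟨finZeroElim, finZeroElim, by rw [iSup_of_empty, sup_bot_eq, add_zero]⟩
      uniq := fun t => Subtype.ext (funext finZeroElim) }
  simp [genericTupleMass]

theorem IsGenericTuple.cons [FiniteDimensional 𝔽 V] {A B : Submodule 𝔽 V} {l : 𝕃}
    (hl : l.1 ≤ B ∧ ¬ l.1 ≤ A) {r : ℕ} {t : Fin r → 𝕃} (ht : IsGenericTuple (A ⊔ l.1) B t) :
    IsGenericTuple A B (Fin.cons l t) := by
  refine ⟨Fin.cases hl fun i => ⟨(ht.1 i).1, fun h => (ht.1 i).2 (h.trans le_sup_left)⟩, ?_⟩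
  have hspan : (⨆ i, ((Fin.cons l t : Fin (r + 1) → 𝕃) i).1) = l.1 ⊔ ⨆ i, (t i).1 :=
    le_antisymm
      (iSup_le (Fin.cases le_sup_left fun i => le_sup_of_le_right (le_iSup_of_le i le_rfl)))
      (sup_le (le_iSup_of_le 0 le_rfl) (iSup_le fun i => le_iSup_of_le i.succ le_rfl))
  rw [hspan, ← sup_assoc, ht.2, finrank_sup_of_finrank_eq_one l.2 hl.2]
  omega

theorem layerMass_le_add (A B D : Submodule 𝔽 V) :
    layerMass f A D ≤ layerMass f A B + layerMass f B D := by
  refine (ENNReal.tsum_mono_subtype f (t := {l : 𝕃 | l.1 ≤ B ∧ ¬ l.1 ≤ A} ∪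
    {l : 𝕃 | l.1 ≤ D ∧ ¬ l.1 ≤ B}) ?_).trans (ENNReal.tsum_union_le f _ _)
  intro l ⟨hD, hA⟩
  by_cases hB : l.1 ≤ B
  exacts [Or.inl ⟨hB, hA⟩, Or.inr ⟨hD, hB⟩]

theorem layerMass_anti_left {A A' : Submodule 𝔽 V} (hA : A ≤ A') (B : Submodule 𝔽 V) :
    layerMass f A' B ≤ layerMass f A B :=
  ENNReal.tsum_mono_subtype f (s := {l : 𝕃 | l.1 ≤ B ∧ ¬ l.1 ≤ A'})
    (t := {l : 𝕃 | l.1 ≤ B ∧ ¬ l.1 ≤ A}) fun _ ⟨hB, hA'⟩ => ⟨hB, fun h => hA' (h.trans hA)⟩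

def IsLight (C : ℝ≥0∞) (A B : Submodule 𝔽 V) : Prop :=
  ∀ π, A < π → π < B → layerMass f A π ≤ C * layerMass f π B

theorem IsLight.mono_left {C : ℝ≥0∞} {A A' B : Submodule 𝔽 V} (h : IsLight f C A B)
    (hA : A ≤ A') : IsLight f C A' B := fun π hA'π hπB =>
  (layerMass_anti_left f hA π).trans (h π (hA.trans_lt hA'π) hπB)

theorem IsLight.layerMass_le {C : ℝ≥0∞} {A π B : Submodule 𝔽 V} (h : IsLight f C A B)
    (hAπ : A < π) (hπB : π < B) : layerMass f A B ≤ (C + 1) * layerMass f π B :=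
  calc layerMass f A B ≤ layerMass f A π + layerMass f π B := layerMass_le_add f A π B
    _ ≤ C * layerMass f π B + layerMass f π B := by gcongr; exact h π hAπ hπB
    _ = (C + 1) * layerMass f π B := by ring

theorem tsum_mul_genericTupleMass_le [FiniteDimensional 𝔽 V] (A B : Submodule 𝔽 V) (r : ℕ) :
    ∑' l : {l : 𝕃 // l.1 ≤ B ∧ ¬ l.1 ≤ A}, f l.1 * genericTupleMass f (A ⊔ l.1.1) B r ≤
      genericTupleMass f A B (r + 1) := by
  let glue : (Σ l : {l : 𝕃 // l.1 ≤ B ∧ ¬ l.1 ≤ A},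
      {t : Fin r → 𝕃 // IsGenericTuple (A ⊔ l.1.1) B t}) →
      {t : Fin (r + 1) → 𝕃 // IsGenericTuple A B t} :=
    fun p => ⟨Fin.cons p.1.1 p.2.1, p.2.2.cons p.1.2⟩
  have hglue : Function.Injective glue := by
    rintro ⟨⟨l, hl⟩, ⟨t, ht⟩⟩ ⟨⟨l', hl'⟩, ⟨t', ht'⟩⟩ h
    have h' : (Fin.cons l t : Fin (r + 1) → 𝕃) = Fin.cons l' t' := congrArg Subtype.val h
    obtain ⟨rfl, rfl⟩ := Fin.cons_inj.mp h'
    rfl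
  calc ∑' l : {l : 𝕃 // l.1 ≤ B ∧ ¬ l.1 ≤ A}, f l.1 * genericTupleMass f (A ⊔ l.1.1) B r
      = ∑' p, ∏ i, f ((glue p).1 i) := by
        simp_rw [ENNReal.tsum_sigma', genericTupleMass, ← ENNReal.tsum_mul_left]
        simp [glue, Fin.prod_univ_succ]
    _ ≤ genericTupleMass f A B (r + 1) :=
        ENNReal.tsum_comp_le_tsum_of_injective hglue fun t => ∏ i, f (t.1 i)

theorem pow_layerMass_le_genericTupleMass [FiniteDimensional 𝔽 V] {C : ℝ≥0∞} {r : ℕ}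
    {A B : Submodule 𝔽 V} (hAB : A ≤ B) (hrank : finrank 𝔽 B = finrank 𝔽 A + r)
    (hlight : IsLight f C A B) :
    layerMass f A B ^ r ≤ (C + 1) ^ r.choose 2 * genericTupleMass f A B r := by
  induction r generalizing A with
  | zero => simp [genericTupleMass_zero]
  | succ r ih =>
    have step : ∀ l : {l : 𝕃 // l.1 ≤ B ∧ ¬ l.1 ≤ A}, layerMass f A B ^ r ≤
        (C + 1) ^ r * ((C + 1) ^ r.choose 2 * genericTupleMass f (A ⊔ l.1.1) B r) := by
      rintro ⟨l, hlB, hlA⟩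
      have hAl : A < A ⊔ l.1 := left_lt_sup.mpr hlA
      have hrank' : finrank 𝔽 B = finrank 𝔽 ↥(A ⊔ l.1) + r := by
        rw [finrank_sup_of_finrank_eq_one l.2 hlA]
        omega
      have hmass : layerMass f A B ^ r ≤ ((C + 1) * layerMass f (A ⊔ l.1) B) ^ r := by
        rcases r.eq_zero_or_pos with rfl | hr
        · simp
        gcongr
        exact hlight.layerMass_le f hAl
          (lt_of_le_of_finrank_lt_finrank (sup_le hAB hlB) (by omega))
      rw [mul_pow] at hmass
      exact hmass.trans (by gcongr; exact ih (sup_le hAB hlB) hrank' (hlight.mono_left f hAl.le))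
    calc layerMass f A B ^ (r + 1)
        = ∑' l : {l : 𝕃 // l.1 ≤ B ∧ ¬ l.1 ≤ A}, f l.1 * layerMass f A B ^ r := by
          rw [pow_succ', layerMass, ENNReal.tsum_mul_right]
      _ ≤ ∑' l : {l : 𝕃 // l.1 ≤ B ∧ ¬ l.1 ≤ A}, f l.1 *
            ((C + 1) ^ r * ((C + 1) ^ r.choose 2 * genericTupleMass f (A ⊔ l.1.1) B r)) :=
          ENNReal.tsum_le_tsum fun l => by gcongr; exact step l
      _ = (C + 1) ^ (r + 1).choose 2 *
            ∑' l : {l : 𝕃 // l.1 ≤ B ∧ ¬ l.1 ≤ A}, f l.1 * genericTupleMass f (A ⊔ l.1.1) B r := by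
          rw [← ENNReal.tsum_mul_left, Nat.choose_succ_succ', Nat.choose_one_right, pow_add]
          congr 1 with l
          ring
      _ ≤ (C + 1) ^ (r + 1).choose 2 * genericTupleMass f A B (r + 1) := by
          gcongr
          exact tsum_mul_genericTupleMass_le f A B r

end Submodule

theorem mass_controlled_by_generic_tuples_general (r : ℕ) (C : ℝ≥0) :
    ∃ β : ℝ≥0,
      ∀ (𝔽 : Type*) [Field 𝔽] (d k : ℕ)
        (P₀ P₁ : Submodule 𝔽 (Fin d → 𝔽)), P₀ < P₁ →
        Module.finrank 𝔽 P₀ = k → Module.finrank 𝔽 P₁ = k + r →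
        ∀ f : LineO 𝔽 d → ℝ≥0, (Function.support f).Finite →
        -- the lightness hypothesis for every intermediate subspace π
        (∀ π : Submodule 𝔽 (Fin d → 𝔽), P₀ < π → π < P₁ →
          (∑' l : {l : LineO 𝔽 d // l.1 ≤ π ∧ ¬ l.1 ≤ P₀}, (f l.1 : ℝ≥0∞)) ≤
            (C : ℝ≥0∞) *
              ∑' l : {l : LineO 𝔽 d // l.1 ≤ P₁ ∧ ¬ l.1 ≤ π}, (f l.1 : ℝ≥0∞)) →
        -- conclusion: (Σ_{l ∈ Δ} f(l))^r ≤ β Σ_{(l₁,…,l_r) spanning} f(l₁)⋯f(l_r)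
        (∑' l : {l : LineO 𝔽 d // l.1 ≤ P₁ ∧ ¬ l.1 ≤ P₀}, (f l.1 : ℝ≥0∞)) ^ r ≤
          (β : ℝ≥0∞) *
            ∑' t : {t : Fin r → LineO 𝔽 d //
                (∀ i, (t i).1 ≤ P₁ ∧ ¬ (t i).1 ≤ P₀) ∧
                Module.finrank 𝔽 ↥(P₀ ⊔ ⨆ i, (t i).1) = k + r},
              ∏ i, (f (t.1 i) : ℝ≥0∞) := by
  refine ⟨(C + 1) ^ r.choose 2, fun 𝔽 _ d k P₀ P₁ hlt hk₀ hk₁ f _ hlight => ?_⟩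
  subst hk₀
  push_cast
  exact Submodule.pow_layerMass_le_genericTupleMass (fun l => f l) hlt.le hk₁ hlight

theorem mass_controlled_by_generic_tuples (r : ℕ) (hr : 1 ≤ r) (C : ℝ≥0) :
    ∃ β : ℝ≥0,
      ∀ (𝔽 : Type*) [Field 𝔽] (d k : ℕ)
        (P₀ P₁ : Submodule 𝔽 (Fin d → 𝔽)), P₀ < P₁ →
        Module.finrank 𝔽 P₀ = k → Module.finrank 𝔽 P₁ = k + r →
        ∀ f : LineO 𝔽 d → ℝ≥0, (Function.support f).Finite →
        -- the lightness hypothesis for every intermediate subspace π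
        (∀ π : Submodule 𝔽 (Fin d → 𝔽), P₀ < π → π < P₁ →
          (∑' l : {l : LineO 𝔽 d // l.1 ≤ π ∧ ¬ l.1 ≤ P₀}, (f l.1 : ℝ≥0∞)) ≤
            (C : ℝ≥0∞) *
              ∑' l : {l : LineO 𝔽 d // l.1 ≤ P₁ ∧ ¬ l.1 ≤ π}, (f l.1 : ℝ≥0∞)) →
        -- conclusion: (Σ_{l ∈ Δ} f(l))^r ≤ β Σ_{(l₁,…,l_r) spanning} f(l₁)⋯f(l_r)
        (∑' l : {l : LineO 𝔽 d // l.1 ≤ P₁ ∧ ¬ l.1 ≤ P₀}, (f l.1 : ℝ≥0∞)) ^ r ≤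
          (β : ℝ≥0∞) *
            ∑' t : {t : Fin r → LineO 𝔽 d //
                (∀ i, (t i).1 ≤ P₁ ∧ ¬ (t i).1 ≤ P₀) ∧
                Module.finrank 𝔽 ↥(P₀ ⊔ ⨆ i, (t i).1) = k + r},
              ∏ i, (f (t.1 i) : ℝ≥0∞) :=
  mass_controlled_by_generic_tuples_general r C
end

section
/- For every integer r ≥ 1, every integer j with k+1 ≤ j < k+r, and every real C ≥ 0 there is a constant β' (depending only on r, j−k and C) with the following property. Let 𝔽 be a field, let Π_0 ⊊ Π_1 be linear subspaces of 𝔽^d with dim Π_0 = k and dim Π_1 = k + r, let Δ be the set of lines through the origin contained in Π_1 but not contained in Π_0, and let f : L_0 → [0,∞) be finitely supported. Suppose that for every linear subspace π with Π_0 ⊊ π ⊊ Π_1 one has Σ_{l ⊆ π, l ⊄ Π_0} f(l) ≤ C · Σ_{l ⊆ Π_1, l ⊄ π} f(l). For k+1 ≤ i ≤ k+r let Γ_i = {(l_1,…,l_r) ∈ Δ^r : the span of Π_0 together with l_1, …, l_r has dimension i}. Then Σ_{(l_1,…,l_r)∈Γ_j} f(l_1)⋯f(l_r) ≤ β' ·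 Σ_{(l_1,…,l_r)∈Γ_{j+1}} f(l_1)⋯f(l_r). -/
/-!
Since `s < r`, a tuple `t ∈ Γ_{k+s}` cannot be independent modulo `Π₀`, so some line `t m` lies in
the span `σ` of `Π₀` and the other lines. Fix those other lines: then `σ` has dimension `k + s`,
so `Π₀ ≤ σ < Π₁`, and lightness at `σ` bounds the weight of the admissible lines `t m ⊆ σ` by `C`
times the weight of the lines `l ⊆ Π₁`, `l ⊄ σ`. Putting such an `l` in place of `t m` gives a
tuple of `Γ_{k+s+1}`. Summing over the `r` choices of `m` gives `β' = r C`.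
-/

open scoped NNReal ENNReal

open Module

namespace Submodule

variable {K V ι : Type*} [DivisionRing K] [AddCommGroup V] [Module K V] [FiniteDimensional K V]

theorem finrank_sup_eq_add_one_of_not_le {σ W : Submodule K V} (hW : finrank K W = 1)
    (h : ¬ W ≤ σ) : finrank K ↥(σ ⊔ W) = finrank K σ + 1 := by
  have hlt := finrank_lt_finrank_of_lt (left_lt_sup.2 h)
  have hle := finrank_add_le_finrank_add_finrank σ W
  omega

theorem finrank_add_card_le_finrank_sup_biSup (P : Submodule K V) {W : ι → Submodule K V}
    (hW : ∀ i, ¬ W i ≤ P ⊔ ⨆ j ≠ i, W j) (S : Finset ι) :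
    finrank K P + S.card ≤ finrank K ↥(P ⊔ ⨆ i ∈ S, W i) := by
  classical
  induction S using Finset.induction_on with
  | empty => simpa using finrank_mono le_sup_left
  | insert a S ha ih =>
    have hS : P ⊔ ⨆ i ∈ S, W i ≤ P ⊔ ⨆ j ≠ a, W j :=
      sup_le_sup_left (biSup_mono fun i hi => ne_of_mem_of_not_mem hi ha) P
    have hlt : P ⊔ ⨆ i ∈ S, W i < P ⊔ ⨆ i ∈ insert a S, W i := by
      rw [Finset.iSup_insert, sup_left_comm, sup_comm (W a)]
      exact left_lt_sup.2 fun h => hW a (h.trans hS)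
    have := finrank_lt_finrank_of_lt hlt
    rw [Finset.card_insert_of_notMem ha]
    omega

theorem exists_le_sup_iSup_ne_of_finrank_lt [Fintype ι] (P : Submodule K V)
    (W : ι → Submodule K V) (h : finrank K ↥(P ⊔ ⨆ i, W i) < finrank K P + Fintype.card ι) :
    ∃ m, W m ≤ P ⊔ ⨆ j ≠ m, W j := by
  by_contra! hW
  have := finrank_add_card_le_finrank_sup_biSup P hW Finset.univ
  rw [Finset.card_univ, show ⨆ i ∈ Finset.univ, W i = ⨆ i, W i by simp] at this
  omega

end Submodule

namespace Equiv

variable {ι β : Type*} [DecidableEq ι] {m : ι} {x : β} {u : {j // j ≠ m} → β}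

@[simp]
theorem funSplitAt_symm_apply_self : (funSplitAt m β).symm (x, u) m = x := by
  simp [funSplitAt_symm_apply]

@[simp]
theorem funSplitAt_symm_apply_coe (j : {j // j ≠ m}) : (funSplitAt m β).symm (x, u) j = u j := by
  simp [funSplitAt_symm_apply, j.2]

theorem iSup_ne_funSplitAt_symm_apply {L : Type*} [CompleteLattice L] (g : β → L) :
    ⨆ (j) (_ : j ≠ m), g ((funSplitAt m β).symm (x, u) j) = ⨆ j, g (u j) := by
  rw [iSup_subtype']
  simp only [funSplitAt_symm_apply_coe]

theorem iSup_funSplitAt_symm_apply {L : Type*} [CompleteLattice L] (g : β → L) :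
    ⨆ i, g ((funSplitAt m β).symm (x, u) i) = g x ⊔ ⨆ j, g (u j) := by
  rw [iSup_split_single _ m, iSup_ne_funSplitAt_symm_apply, funSplitAt_symm_apply_self]

theorem prod_funSplitAt_symm_apply [Fintype ι] {M : Type*} [CommMonoid M] (g : β → M) :
    ∏ i, g ((funSplitAt m β).symm (x, u) i) = g x * ∏ j, g (u j) := by
  simp only [Fintype.prod_eq_mul_prod_subtype_ne _ m, funSplitAt_symm_apply_self,
    funSplitAt_symm_apply_coe]

theorem forall_funSplitAt_symm_apply (p : β → Prop) :
    (∀ i, p ((funSplitAt m β).symm (x, u) i)) ↔ p x ∧ ∀ j, p (u j) := by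
  refine ⟨fun h => ⟨by simpa only [funSplitAt_symm_apply_self] using h m,
    fun j => by simpa only [funSplitAt_symm_apply_coe] using h j⟩, fun h i => ?_⟩
  by_cases hi : i = m
  · subst hi; simpa only [funSplitAt_symm_apply_self] using h.1
  · simpa only [← funSplitAt_symm_apply_coe (x := x)] using h.2 ⟨i, hi⟩

end Equiv

theorem ENNReal.tsum_eq_tsum_funSplitAt {ι β : Type*} [DecidableEq ι] (m : ι)
    (g : (ι → β) → ℝ≥0∞) :
    ∑' t, g t = ∑' (u : {j // j ≠ m} → β) (x : β), g ((Equiv.funSplitAt m β).symm (x, u)) := by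
  rw [← (Equiv.funSplitAt m β).symm.tsum_eq, ENNReal.tsum_prod', ENNReal.tsum_comm]

section Tuples

open Equiv Set

variable {𝔽 ι : Type*} [Field 𝔽] {d : ℕ}
  {P₀ P₁ : Submodule 𝔽 (Fin d → 𝔽)} {C : ℝ≥0} {f : LineO 𝔽 d → ℝ≥0} {n : ℕ}

def IsLight (C : ℝ≥0) (P₀ P₁ : Submodule 𝔽 (Fin d → 𝔽)) (f : LineO 𝔽 d → ℝ≥0) : Prop :=
  ∀ π : Submodule 𝔽 (Fin d → 𝔽), P₀ < π → π < P₁ →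
    (∑' l : {l : LineO 𝔽 d // l.1 ≤ π ∧ ¬ l.1 ≤ P₀}, (f l.1 : ℝ≥0∞)) ≤
      C * ∑' l : {l : LineO 𝔽 d // l.1 ≤ P₁ ∧ ¬ l.1 ≤ π}, (f l.1 : ℝ≥0∞)

theorem IsLight.tsum_le (hf : IsLight C P₀ P₁ f) {π : Submodule 𝔽 (Fin d → 𝔽)}
    (hπ₀ : P₀ ≤ π) (hπ₁ : π < P₁) :
    (∑' l : {l : LineO 𝔽 d // l.1 ≤ π ∧ ¬ l.1 ≤ P₀}, (f l.1 : ℝ≥0∞)) ≤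
      C * ∑' l : {l : LineO 𝔽 d // l.1 ≤ P₁ ∧ ¬ l.1 ≤ π}, (f l.1 : ℝ≥0∞) := by
  rcases hπ₀.lt_or_eq with hπ₀ | rfl
  · exact hf π hπ₀ hπ₁
  · have : IsEmpty {l : LineO 𝔽 d // l.1 ≤ P₀ ∧ ¬ l.1 ≤ P₀} := ⟨fun l => l.2.2 l.2.1⟩
    simp

noncomputable def tupleWeight [Fintype ι] (f : LineO 𝔽 d → ℝ≥0) (t : ι → LineO 𝔽 d) : ℝ≥0∞ :=
  ∏ i, (f (t i) : ℝ≥0∞)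

variable (P₀ P₁) in
def gammaSet (n : ℕ) : Set (ι → LineO 𝔽 d) :=
  {t | (∀ i, (t i).1 ≤ P₁ ∧ ¬ (t i).1 ≤ P₀) ∧ finrank 𝔽 ↥(P₀ ⊔ ⨆ i, (t i).1) = n}

variable (P₀ P₁) in
def redundantAt (n : ℕ) (m : ι) : Set (ι → LineO 𝔽 d) :=
  {t ∈ gammaSet P₀ P₁ n | (t m).1 ≤ P₀ ⊔ ⨆ j ≠ m, (t j).1}

theorem gammaSet_subset_iUnion_redundantAt [Fintype ι]
    (hn : n < finrank 𝔽 P₀ + Fintype.card ι) :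
    gammaSet (ι := ι) P₀ P₁ n ⊆ ⋃ m, redundantAt P₀ P₁ n m := fun t ht =>
  mem_iUnion.2 <| (Submodule.exists_le_sup_iSup_ne_of_finrank_lt P₀ (fun i => (t i).1)
    (ht.2 ▸ hn)).imp fun _ hm => ⟨ht, hm⟩

section Split

variable [DecidableEq ι] {m : ι} {u : {j // j ≠ m} → LineO 𝔽 d} {x : LineO 𝔽 d}

theorem of_funSplitAt_symm_mem_redundantAt
    (h : (funSplitAt m _).symm (x, u) ∈ redundantAt P₀ P₁ n m) :
    ((∀ j, (u j).1 ≤ P₁ ∧ ¬ (u j).1 ≤ P₀) ∧ finrank 𝔽 ↥(P₀ ⊔ ⨆ j, (u j).1) = n) ∧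
      x.1 ≤ P₀ ⊔ ⨆ j, (u j).1 ∧ ¬ x.1 ≤ P₀ := by
  obtain ⟨⟨htransversal, hrank⟩, hx⟩ := h
  rw [funSplitAt_symm_apply_self, iSup_ne_funSplitAt_symm_apply (g := fun l : LineO 𝔽 d => l.1)]
    at hx
  rw [iSup_funSplitAt_symm_apply (g := fun l : LineO 𝔽 d => l.1), sup_left_comm, sup_comm,
    sup_eq_left.2 hx] at hrank
  rw [forall_funSplitAt_symm_apply (fun l : LineO 𝔽 d => l.1 ≤ P₁ ∧ ¬ l.1 ≤ P₀)] at htransversal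
  exact ⟨⟨htransversal.2, hrank⟩, hx, htransversal.1.2⟩

theorem funSplitAt_symm_mem_gammaSet_succ (hu : ∀ j, (u j).1 ≤ P₁ ∧ ¬ (u j).1 ≤ P₀)
    (hrank : finrank 𝔽 ↥(P₀ ⊔ ⨆ j, (u j).1) = n) (hx : x.1 ≤ P₁)
    (hxσ : ¬ x.1 ≤ P₀ ⊔ ⨆ j, (u j).1) :
    (funSplitAt m _).symm (x, u) ∈ gammaSet P₀ P₁ (n + 1) := by
  refine ⟨(forall_funSplitAt_symm_apply (fun l : LineO 𝔽 d => l.1 ≤ P₁ ∧ ¬ l.1 ≤ P₀)).2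
    ⟨⟨hx, fun h => hxσ (h.trans le_sup_left)⟩, hu⟩, ?_⟩
  rw [iSup_funSplitAt_symm_apply (g := fun l : LineO 𝔽 d => l.1), sup_left_comm, sup_comm,
    Submodule.finrank_sup_eq_add_one_of_not_le x.2 hxσ, hrank]

variable [Fintype ι]

theorem tupleWeight_funSplitAt_symm :
    tupleWeight f ((funSplitAt m _).symm (x, u)) = f x * tupleWeight f u :=
  prod_funSplitAt_symm_apply (fun l => (f l : ℝ≥0∞))

theorem tsum_indicator_redundantAt_funSplitAt_symm_le :
    ∑' x, (redundantAt P₀ P₁ n m).indicator (tupleWeight f) ((funSplitAt m _).symm (x, u)) ≤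
      (∑' l : {l : LineO 𝔽 d // l.1 ≤ P₀ ⊔ ⨆ j, (u j).1 ∧ ¬ l.1 ≤ P₀}, (f l.1 : ℝ≥0∞)) *
        tupleWeight f u := by
  set σ := P₀ ⊔ ⨆ j, (u j).1
  calc _ ≤ ∑' x, {l : LineO 𝔽 d | l.1 ≤ σ ∧ ¬ l.1 ≤ P₀}.indicator (fun l => (f l : ℝ≥0∞)) x *
          tupleWeight f u := by
        refine ENNReal.tsum_le_tsum fun x => indicator_apply_le' (fun ht => ?_) fun _ => zero_le
        rw [indicator_of_mem (show x ∈ {l : LineO 𝔽 d | l.1 ≤ σ ∧ ¬ l.1 ≤ P₀} from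
          (of_funSplitAt_symm_mem_redundantAt ht).2), tupleWeight_funSplitAt_symm]
    _ = _ := by
        rw [ENNReal.tsum_mul_right, ← tsum_subtype]
        rfl

theorem tsum_mul_tupleWeight_le_tsum_indicator_gammaSet
    (hu : ∀ j, (u j).1 ≤ P₁ ∧ ¬ (u j).1 ≤ P₀) (hrank : finrank 𝔽 ↥(P₀ ⊔ ⨆ j, (u j).1) = n) :
    (∑' l : {l : LineO 𝔽 d // l.1 ≤ P₁ ∧ ¬ l.1 ≤ P₀ ⊔ ⨆ j, (u j).1}, (f l.1 : ℝ≥0∞)) *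
        tupleWeight f u ≤
      ∑' x, (gammaSet P₀ P₁ (n + 1)).indicator (tupleWeight f) ((funSplitAt m _).symm (x, u)) := by
  set σ := P₀ ⊔ ⨆ j, (u j).1
  calc _ = ∑' x, {l : LineO 𝔽 d | l.1 ≤ P₁ ∧ ¬ l.1 ≤ σ}.indicator (fun l => (f l : ℝ≥0∞)) x *
          tupleWeight f u := by
        rw [ENNReal.tsum_mul_right, ← tsum_subtype]
        rfl
    _ ≤ _ := by
        refine ENNReal.tsum_le_tsum fun x => ?_
        by_cases hx : x ∈ {l : LineO 𝔽 d | l.1 ≤ P₁ ∧ ¬ l.1 ≤ σ}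
        · rw [indicator_of_mem hx, indicator_of_mem (funSplitAt_symm_mem_gammaSet_succ hu hrank
            hx.1 hx.2), tupleWeight_funSplitAt_symm]
        · rw [indicator_of_notMem hx, zero_mul]
          exact zero_le

theorem tsum_redundantAt_fibre_le (hP : P₀ ≤ P₁) (hf : IsLight C P₀ P₁ f)
    (hn : n < finrank 𝔽 P₁) (u : {j // j ≠ m} → LineO 𝔽 d) :
    ∑' x, (redundantAt P₀ P₁ n m).indicator (tupleWeight f) ((funSplitAt m _).symm (x, u)) ≤
      C * ∑' x, (gammaSet P₀ P₁ (n + 1)).indicator (tupleWeight f)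
        ((funSplitAt m _).symm (x, u)) := by
  by_cases hu : (∀ j, (u j).1 ≤ P₁ ∧ ¬ (u j).1 ≤ P₀) ∧ finrank 𝔽 ↥(P₀ ⊔ ⨆ j, (u j).1) = n
  swap
  · refine (ENNReal.tsum_eq_zero.2 fun x => indicator_of_notMem (fun ht => hu ?_) _).trans_le
      zero_le
    exact (of_funSplitAt_symm_mem_redundantAt ht).1
  obtain ⟨hu, hrank⟩ := hu
  have hσP₁ : P₀ ⊔ ⨆ j, (u j).1 < P₁ := by
    refine lt_of_le_of_ne (sup_le hP (iSup_le fun j => (hu j).1)) ?_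
    rintro rfl
    omega
  calc _ ≤ _ := tsum_indicator_redundantAt_funSplitAt_symm_le
    _ ≤ (C * ∑' l : {l : LineO 𝔽 d // l.1 ≤ P₁ ∧ ¬ l.1 ≤ P₀ ⊔ ⨆ j, (u j).1}, (f l.1 : ℝ≥0∞)) *
          tupleWeight f u := by
        gcongr
        exact hf.tsum_le le_sup_left hσP₁
    _ ≤ _ := by
        rw [mul_assoc]
        gcongr
        exact tsum_mul_tupleWeight_le_tsum_indicator_gammaSet hu hrank

theorem tsum_redundantAt_le (hP : P₀ ≤ P₁) (hf : IsLight C P₀ P₁ f)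
    (hn : n < finrank 𝔽 P₁) (m : ι) :
    ∑' t : redundantAt P₀ P₁ n m, tupleWeight f t.1 ≤
      C * ∑' t : gammaSet (ι := ι) P₀ P₁ (n + 1), tupleWeight f t.1 := by
  rw [tsum_subtype, tsum_subtype, ENNReal.tsum_eq_tsum_funSplitAt m,
    ENNReal.tsum_eq_tsum_funSplitAt m, ← ENNReal.tsum_mul_left]
  exact ENNReal.tsum_le_tsum fun u => tsum_redundantAt_fibre_le hP hf hn u

end Split

end Tuples

theorem gamma_step_general (r s : ℕ) (hsr : s < r) (C : ℝ≥0) :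
    ∃ β' : ℝ≥0,
      ∀ (𝔽 : Type*) [Field 𝔽] (d k : ℕ)
        (P₀ P₁ : Submodule 𝔽 (Fin d → 𝔽)), P₀ < P₁ →
        Module.finrank 𝔽 P₀ = k → Module.finrank 𝔽 P₁ = k + r →
        ∀ f : LineO 𝔽 d → ℝ≥0, (Function.support f).Finite →
        -- the lightness hypothesis for every intermediate subspace π
        (∀ π : Submodule 𝔽 (Fin d → 𝔽), P₀ < π → π < P₁ →
          (∑' l : {l : LineO 𝔽 d // l.1 ≤ π ∧ ¬ l.1 ≤ P₀}, (f l.1 : ℝ≥0∞)) ≤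
            (C : ℝ≥0∞) *
              ∑' l : {l : LineO 𝔽 d // l.1 ≤ P₁ ∧ ¬ l.1 ≤ π}, (f l.1 : ℝ≥0∞)) →
        -- conclusion: Σ_{Γ_j} ∏ f ≤ β' Σ_{Γ_{j+1}} ∏ f, where j = k + s
        (∑' t : {t : Fin r → LineO 𝔽 d //
              (∀ i, (t i).1 ≤ P₁ ∧ ¬ (t i).1 ≤ P₀) ∧
              Module.finrank 𝔽 ↥(P₀ ⊔ ⨆ i, (t i).1) = k + s},
            ∏ i, (f (t.1 i) : ℝ≥0∞)) ≤
          (β' : ℝ≥0∞) *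
            ∑' t : {t : Fin r → LineO 𝔽 d //
                (∀ i, (t i).1 ≤ P₁ ∧ ¬ (t i).1 ≤ P₀) ∧
                Module.finrank 𝔽 ↥(P₀ ⊔ ⨆ i, (t i).1) = k + s + 1},
              ∏ i, (f (t.1 i) : ℝ≥0∞) := by
  refine ⟨r * C, fun 𝔽 _ d k P₀ P₁ hP hk hk1 f _ hf => ?_⟩
  have hcover : gammaSet P₀ P₁ (k + s) ⊆ ⋃ m : Fin r, redundantAt P₀ P₁ (k + s) m :=
    gammaSet_subset_iUnion_redundantAt (by rw [hk, Fintype.card_fin]; omega)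
  calc ∑' t : gammaSet P₀ P₁ (k + s), tupleWeight f t.1
      ≤ ∑' m : Fin r, ∑' t : redundantAt P₀ P₁ (k + s) m, tupleWeight f t.1 :=
        (ENNReal.tsum_mono_subtype _ hcover).trans (ENNReal.tsum_iUnion_le_tsum _ _)
    _ ≤ ∑' _ : Fin r, C * ∑' t : gammaSet P₀ P₁ (k + s + 1), tupleWeight f t.1 :=
        ENNReal.tsum_le_tsum fun m => tsum_redundantAt_le hP.le hf (by omega) m
    _ = (r * C : ℝ≥0) * ∑' t : gammaSet P₀ P₁ (k + s + 1), tupleWeight f t.1 := by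
        rw [ENNReal.tsum_const, ENat.card_eq_coe_fintype_card, Fintype.card_fin]
        simp [mul_assoc]

theorem gamma_step (r s : ℕ) (hs : 1 ≤ s) (hsr : s < r) (C : ℝ≥0) :
    ∃ β' : ℝ≥0,
      ∀ (𝔽 : Type*) [Field 𝔽] (d k : ℕ)
        (P₀ P₁ : Submodule 𝔽 (Fin d → 𝔽)), P₀ < P₁ →
        Module.finrank 𝔽 P₀ = k → Module.finrank 𝔽 P₁ = k + r →
        ∀ f : LineO 𝔽 d → ℝ≥0, (Function.support f).Finite →
        -- the lightness hypothesis for every intermediate subspace π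
        (∀ π : Submodule 𝔽 (Fin d → 𝔽), P₀ < π → π < P₁ →
          (∑' l : {l : LineO 𝔽 d // l.1 ≤ π ∧ ¬ l.1 ≤ P₀}, (f l.1 : ℝ≥0∞)) ≤
            (C : ℝ≥0∞) *
              ∑' l : {l : LineO 𝔽 d // l.1 ≤ P₁ ∧ ¬ l.1 ≤ π}, (f l.1 : ℝ≥0∞)) →
        -- conclusion: Σ_{Γ_j} ∏ f ≤ β' Σ_{Γ_{j+1}} ∏ f, where j = k + s
        (∑' t : {t : Fin r → LineO 𝔽 d //
              (∀ i, (t i).1 ≤ P₁ ∧ ¬ (t i).1 ≤ P₀) ∧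
              Module.finrank 𝔽 ↥(P₀ ⊔ ⨆ i, (t i).1) = k + s},
            ∏ i, (f (t.1 i) : ℝ≥0∞)) ≤
          (β' : ℝ≥0∞) *
            ∑' t : {t : Fin r → LineO 𝔽 d //
                (∀ i, (t i).1 ≤ P₁ ∧ ¬ (t i).1 ≤ P₀) ∧
                Module.finrank 𝔽 ↥(P₀ ⊔ ⨆ i, (t i).1) = k + s + 1},
              ∏ i, (f (t.1 i) : ℝ≥0∞) :=
  gamma_step_general r s hsr C
end

section
/- Let d ≥ 1 and N ≥ 0 be integers, let 0 = k_0 < k_1 < ⋯ < k_N < k_{N+1} = d be integers, and let F_1 ≥ F_2 ≥ ⋯ ≥ F_{N+1} > 0 be real numbers. For 1 ≤ n ≤ N+1 define ρ_n = F_n^{−1} · ∏_{m=1}^{N+1} F_m^{(k_m − k_{m−1})/d} (real powers). Suppose m_1, …, m_{N+1} are nonnegative integers with m_1 + ⋯ + m_{N+1} = d and with the partial-sum constraint m_1 + ⋯ + m_n ≤ k_n for every 1 ≤ n ≤ N. Then ρ_1^{m_1} ⋯ ρ_{N+1}^{m_{N+1}} ≥ 1; equivalently, ∏_{n=1}^{N+1}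 F_n^{k_n − k_{n−1} − m_n} ≥ 1. -/
/-!
Put `a n = (k n - k (n - 1)) - m n`. Its partial sums `k n - (m 1 + ⋯ + m n)` are nonnegative
for `n ≤ N` and vanish at `n = N + 1`, while `log F` is antitone, so summation by parts gives
`∑ a n * log (F n) ≥ 0`, that is `∏ F n ^ a n ≥ 1`. Since `∑ m n = d`, the product of the `ρ n ^ m n`
is the same number: the common factor of the `ρ n` contributes `∏ F n ^ (k n - k (n - 1))`.
-/

open Finset Real

theorem Finset.sum_Icc_one_sub_pred {M : Type*} [AddCommGroup M] (f : ℕ → M) (n : ℕ) :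
    ∑ i ∈ Icc 1 n, (f i - f (i - 1)) = f n - f 0 := by
  induction n with
  | zero => simp
  | succ n ih =>
    rw [sum_Icc_succ_top (by omega), ih, Nat.add_sub_cancel]
    abel

section SummationByParts

variable {R : Type*} [CommRing R] [LinearOrder R] [IsStrictOrderedRing R] {a L : ℕ → R} {n : ℕ}

theorem sum_Icc_mul_le_sum_Icc_mul_of_antitone
    (hL : ∀ j, 1 ≤ j → j < n → L (j + 1) ≤ L j)
    (ha : ∀ j, j < n → 0 ≤ ∑ i ∈ Icc 1 j, a i) :
    (∑ i ∈ Icc 1 n, a i) * L n ≤ ∑ i ∈ Icc 1 n, a i * L i := by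
  induction n with
  | zero => simp
  | succ n ih =>
    have ih := ih (fun j h1 h2 => hL j h1 (by omega)) (fun j hj => ha j (by omega))
    have hstep : (∑ i ∈ Icc 1 n, a i) * L (n + 1) ≤ (∑ i ∈ Icc 1 n, a i) * L n := by
      rcases Nat.eq_zero_or_pos n with rfl | hn
      · simp
      · exact mul_le_mul_of_nonneg_left (hL n hn (by omega)) (ha n (by omega))
    rw [sum_Icc_succ_top (by omega), sum_Icc_succ_top (by omega), add_mul]
    linarith

theorem sum_Icc_mul_nonneg_of_antitone
    (hL : ∀ j, 1 ≤ j → j < n → L (j + 1) ≤ L j)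
    (ha : ∀ j, j < n → 0 ≤ ∑ i ∈ Icc 1 j, a i) (hsum : ∑ i ∈ Icc 1 n, a i = 0) :
    0 ≤ ∑ i ∈ Icc 1 n, a i * L i := by
  simpa [hsum] using sum_Icc_mul_le_sum_Icc_mul_of_antitone hL ha

end SummationByParts

section Products

variable {ι : Type*} {s : Finset ι} {F : ι → ℝ}

theorem one_le_prod_rpow_of_sum_mul_log_nonneg {a : ι → ℝ} (hF : ∀ i ∈ s, 0 < F i)
    (h : 0 ≤ ∑ i ∈ s, a i * log (F i)) :
    1 ≤ ∏ i ∈ s, F i ^ a i := by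
  have hexp : ∏ i ∈ s, F i ^ a i = exp (∑ i ∈ s, a i * log (F i)) := by
    rw [exp_sum]
    refine prod_congr rfl fun i hi => ?_
    rw [rpow_def_of_pos (hF i hi), mul_comm]
  exact hexp ▸ one_le_exp h

theorem prod_inv_mul_prod_rpow_div_pow {e : ι → ℝ} {m : ι → ℕ} {d : ℕ}
    (hF : ∀ i ∈ s, 0 < F i) (hd : d ≠ 0) (hm : ∑ i ∈ s, m i = d) :
    ∏ i ∈ s, ((F i)⁻¹ * ∏ j ∈ s, F j ^ (e j / d)) ^ m i = ∏ i ∈ s, F i ^ (e i - m i) := by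
  calc ∏ i ∈ s, ((F i)⁻¹ * ∏ j ∈ s, F j ^ (e j / d)) ^ m i
      = (∏ i ∈ s, (F i)⁻¹ ^ m i) * (∏ j ∈ s, F j ^ (e j / d)) ^ d := by
        rw [← hm, ← prod_pow_eq_pow_sum, ← prod_mul_distrib]
        simp only [mul_pow]
    _ = (∏ i ∈ s, F i ^ (-(m i : ℝ))) * ∏ i ∈ s, F i ^ e i := by
        rw [← prod_pow]
        congr 1 <;> refine prod_congr rfl fun i hi => ?_
        · rw [rpow_neg (hF i hi).le, rpow_natCast, inv_pow]
        · rw [← rpow_natCast, ← rpow_mul (hF i hi).le, div_mul_cancel₀ _ (by exact_mod_cast hd)]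
    _ = ∏ i ∈ s, F i ^ (e i - m i) := by
        rw [← prod_mul_distrib]
        refine prod_congr rfl fun i hi => ?_
        rw [← rpow_add (hF i hi), neg_add_eq_sub]

end Products

theorem admissibility_general
    (d N : ℕ) (hd : 1 ≤ d)
    (k : ℕ → ℕ) (hk0 : k 0 = 0) (hkN : k (N + 1) = d)
    (F : ℕ → ℝ) (hFpos : ∀ n, 1 ≤ n → n ≤ N + 1 → 0 < F n)
    (hFmono : ∀ n, 1 ≤ n → n ≤ N → F (n + 1) ≤ F n)
    (m : ℕ → ℕ) (hmsum : ∑ n ∈ Finset.Icc 1 (N + 1), m n = d)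
    (hpartial : ∀ n, 1 ≤ n → n ≤ N → ∑ i ∈ Finset.Icc 1 n, m i ≤ k n) :
    -- ρ_1^{m_1} ⋯ ρ_{N+1}^{m_{N+1}} ≥ 1, where
    -- ρ_n = F_n⁻¹ ∏_{m'=1}^{N+1} F_{m'}^{(k_{m'} − k_{m'−1})/d}
    (1 : ℝ) ≤ ∏ n ∈ Finset.Icc 1 (N + 1),
        ((F n)⁻¹ * ∏ m' ∈ Finset.Icc 1 (N + 1),
            F m' ^ (((k m' : ℝ) - (k (m' - 1) : ℝ)) / d)) ^ m n
    ∧ -- equivalently, ∏_{n=1}^{N+1} F_n^{k_n − k_{n−1} − m_n} ≥ 1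
    (1 : ℝ) ≤ ∏ n ∈ Finset.Icc 1 (N + 1),
        F n ^ ((k n : ℝ) - (k (n - 1) : ℝ) - (m n : ℝ)) := by
  have hF : ∀ n ∈ Icc 1 (N + 1), 0 < F n := fun n hn => hFpos n (mem_Icc.1 hn).1 (mem_Icc.1 hn).2
  set a : ℕ → ℝ := fun n => (k n : ℝ) - (k (n - 1) : ℝ) - (m n : ℝ)
  have hpartial_a : ∀ j, ∑ i ∈ Icc 1 j, a i = k j - ∑ i ∈ Icc 1 j, (m i : ℝ) := fun j => by
    rw [sum_sub_distrib, sum_Icc_one_sub_pred (fun i => (k i : ℝ)), hk0, Nat.cast_zero, sub_zero]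
  have ha_nonneg : ∀ j, j < N + 1 → 0 ≤ ∑ i ∈ Icc 1 j, a i := fun j hj => by
    rw [hpartial_a, sub_nonneg, ← Nat.cast_sum, Nat.cast_le]
    rcases Nat.eq_zero_or_pos j with rfl | hj0
    · simp
    · exact hpartial j hj0 (by omega)
  have ha_sum : ∑ i ∈ Icc 1 (N + 1), a i = 0 := by
    rw [hpartial_a, hkN, ← Nat.cast_sum, hmsum, sub_self]
  have hlogF : ∀ j, 1 ≤ j → j < N + 1 → log (F (j + 1)) ≤ log (F j) := fun j h1 h2 =>
    log_le_log (hFpos _ (by omega) (by omega)) (hFmono j h1 (by omega))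
  have hprod : 1 ≤ ∏ n ∈ Icc 1 (N + 1), F n ^ a n :=
    one_le_prod_rpow_of_sum_mul_log_nonneg hF
      (sum_Icc_mul_nonneg_of_antitone hlogF ha_nonneg ha_sum)
  exact ⟨(prod_inv_mul_prod_rpow_div_pow hF (by omega) hmsum).symm ▸ hprod, hprod⟩

theorem admissibility
    (d N : ℕ) (hd : 1 ≤ d)
    (k : ℕ → ℕ) (hk0 : k 0 = 0) (hkN : k (N + 1) = d)
    (hkmono : ∀ n, n ≤ N → k n < k (n + 1))
    (F : ℕ → ℝ) (hFpos : ∀ n, 1 ≤ n → n ≤ N + 1 → 0 < F n)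
    (hFmono : ∀ n, 1 ≤ n → n ≤ N → F (n + 1) ≤ F n)
    (m : ℕ → ℕ) (hmsum : ∑ n ∈ Finset.Icc 1 (N + 1), m n = d)
    (hpartial : ∀ n, 1 ≤ n → n ≤ N → ∑ i ∈ Finset.Icc 1 n, m i ≤ k n) :
    -- ρ_1^{m_1} ⋯ ρ_{N+1}^{m_{N+1}} ≥ 1, where
    -- ρ_n = F_n⁻¹ ∏_{m'=1}^{N+1} F_{m'}^{(k_{m'} − k_{m'−1})/d}
    (1 : ℝ) ≤ ∏ n ∈ Finset.Icc 1 (N + 1),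
        ((F n)⁻¹ * ∏ m' ∈ Finset.Icc 1 (N + 1),
            F m' ^ (((k m' : ℝ) - (k (m' - 1) : ℝ)) / d)) ^ m n
    ∧ -- equivalently, ∏_{n=1}^{N+1} F_n^{k_n − k_{n−1} − m_n} ≥ 1
    (1 : ℝ) ≤ ∏ n ∈ Finset.Icc 1 (N + 1),
        F n ^ ((k n : ℝ) - (k (n - 1) : ℝ) - (m n : ℝ)) :=
  admissibility_general d N hd k hk0 hkN F hFpos hFmono m hmsum hpartial
end

section
/- Let X be a finite set with a weight μ : X → [0,∞), let Y be a finite set with a lattice norm N on ℝ^Y, and let K : X × Y^d → [0,∞) be a kernel with associated positive multilinear operator T. Let 1 ≤ q < ∞ and A > 0. If for every nonnegative f ∈ ℝ^Y one has ‖T(f,…,f)^{1/d}‖_{L^q(μ)} ≤ A·N(f), then for all nonnegative f_1, …, f_d ∈ ℝ^Y one has ‖T(f_1,…,f_d)^{1/d}‖_{L^q(μ)} ≤ d·A·(N(f_1)⋯N(f_d))^{1/d}. -/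
/-!
Rescaling `f j ↦ c j • f j` with `∏ j, c j = 1` does not change `T(f₁, …, f_d)`, and for nonnegative
data `T` is monotone, so `T(f₁, …, f_d) ≤ T(F, …, F)` with `F = ∑ j, c j • f j`. Applying the diagonal
bound to `F` and the triangle inequality gives the bound `A ∑ j, c j N(f j)`; the choice
`c j = (∏ i, N (f i))^(1/d) / N (f j)` makes every summand equal to the geometric mean.
-/

open Finset

section MultilinearOperator

variable {X Y : Type*} [Fintype Y] {d : ℕ}

def multilinearOp (K : X → (Fin d → Y) → ℝ) (f : Fin d → Y → ℝ) (x : X) : ℝ :=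
  ∑ y : Fin d → Y, K x y * ∏ j, f j (y j)

theorem multilinearOp_smul (K : X → (Fin d → Y) → ℝ) (c : Fin d → ℝ) (f : Fin d → Y → ℝ)
    (x : X) : multilinearOp K (fun j => c j • f j) x = (∏ j, c j) * multilinearOp K f x := by
  simp only [multilinearOp, Pi.smul_apply, smul_eq_mul, prod_mul_distrib, mul_sum]
  exact sum_congr rfl fun _ _ => by ring

theorem multilinearOp_nonneg {K : X → (Fin d → Y) → ℝ} (hK : ∀ x y, 0 ≤ K x y)
    {f : Fin d → Y → ℝ} (hf : ∀ j y, 0 ≤ f j y) (x : X) : 0 ≤ multilinearOp K f x :=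
  sum_nonneg fun y _ => mul_nonneg (hK x y) (prod_nonneg fun j _ => hf j (y j))

theorem multilinearOp_mono {K : X → (Fin d → Y) → ℝ} (hK : ∀ x y, 0 ≤ K x y)
    {f g : Fin d → Y → ℝ} (hf : ∀ j y, 0 ≤ f j y) (hfg : ∀ j y, f j y ≤ g j y) (x : X) :
    multilinearOp K f x ≤ multilinearOp K g x :=
  sum_le_sum fun y _ => mul_le_mul_of_nonneg_left
    (prod_le_prod (fun j _ => hf j (y j)) fun j _ => hfg j (y j)) (hK x y)

theorem multilinearOp_eq_zero {K : X → (Fin d → Y) → ℝ} {f : Fin d → Y → ℝ} {j : Fin d}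
    (hj : f j = 0) (x : X) : multilinearOp K f x = 0 :=
  sum_eq_zero fun y _ => by
    rw [prod_eq_zero (mem_univ j) (by simp [hj]), mul_zero]

theorem multilinearOp_le_diagonal {K : X → (Fin d → Y) → ℝ} (hK : ∀ x y, 0 ≤ K x y)
    {f : Fin d → Y → ℝ} (hf : ∀ j y, 0 ≤ f j y) {c : Fin d → ℝ} (hc : ∀ j, 0 ≤ c j)
    (hc_prod : ∏ j, c j = 1) (x : X) :
    multilinearOp K f x ≤ multilinearOp K (fun _ => ∑ j, c j • f j) x := by
  have hcf : ∀ j y, 0 ≤ c j * f j y := fun j y => mul_nonneg (hc j) (hf j y)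
  calc multilinearOp K f x = multilinearOp K (fun j => c j • f j) x := by
        rw [multilinearOp_smul, hc_prod, one_mul]
    _ ≤ multilinearOp K (fun _ => ∑ j, c j • f j) x :=
        multilinearOp_mono hK hcf (fun j y => by
          simpa only [Finset.sum_apply, Pi.smul_apply, smul_eq_mul] using
            single_le_sum (fun i _ => hcf i y) (mem_univ j)) x

end MultilinearOperator

theorem rpow_sum_mul_rpow_le_of_le {X : Type*} [Fintype X] {μ : X → ℝ} (hμ : ∀ x, 0 ≤ μ x)
    {g h : X → ℝ} (hg : ∀ x, 0 ≤ g x) (hgh : ∀ x, g x ≤ h x) {p r : ℝ} (hp : 0 ≤ p)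
    (hr : 0 ≤ r) : (∑ x, μ x * g x ^ p) ^ r ≤ (∑ x, μ x * h x ^ p) ^ r :=
  Real.rpow_le_rpow (sum_nonneg fun x _ => mul_nonneg (hμ x) (Real.rpow_nonneg (hg x) p))
    (sum_le_sum fun x _ => mul_le_mul_of_nonneg_left
      (Real.rpow_le_rpow (hg x) (hgh x) hp) (hμ x)) hr

theorem prod_geomMean_div_eq_one {d : ℕ} (hd : d ≠ 0) {a : Fin d → ℝ} (ha : ∀ j, 0 < a j) :
    ∏ j, (∏ i, a i) ^ (1 / (d : ℝ)) / a j = 1 := by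
  have hP : 0 < ∏ i, a i := prod_pos fun i _ => ha i
  rw [prod_div_distrib, prod_const, card_univ, Fintype.card_fin, one_div,
    Real.rpow_inv_natCast_pow hP.le hd, div_self hP.ne']

theorem le_sum_abs_mul_of_subadditive {ι V : Type*} [AddCommMonoid V] [Module ℝ V] {N : V → ℝ}
    (hN_add : ∀ f g, N (f + g) ≤ N f + N g) (hN_smul : ∀ (c : ℝ) f, N (c • f) = |c| * N f)
    (s : Finset ι) (c : ι → ℝ) (f : ι → V) :
    N (∑ j ∈ s, c j • f j) ≤ ∑ j ∈ s, |c j| * N (f j) := by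
  simpa only [hN_smul] using
    le_sum_of_subadditive N (by simpa using (hN_smul 0 0).le) hN_add s fun j => c j • f j

theorem diagonal_implies_offdiagonal_general
    (d : ℕ) (hd : 1 ≤ d)
    (X : Type*) [Fintype X] (μ : X → ℝ) (hμ : ∀ x, 0 ≤ μ x)
    (Y : Type*) [Fintype Y]
    -- lattice norm on ℝ^Y
    (N : (Y → ℝ) → ℝ)
    (hN_nonneg : ∀ f, 0 ≤ N f)
    (hN_add : ∀ f g, N (f + g) ≤ N f + N g)
    (hN_smul : ∀ (c : ℝ) f, N (c • f) = |c| * N f)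
    (hN_defin : ∀ f, N f = 0 → f = 0)
    -- nonnegative kernel
    (K : X → (Fin d → Y) → ℝ) (hK : ∀ x y, 0 ≤ K x y)
    (q : ℝ) (hq : 1 ≤ q)
    (A : ℝ) (hA : 0 < A)
    -- diagonal hypothesis: ‖T(f,…,f)^{1/d}‖_{L^q(μ)} ≤ A N(f)
    (hdiag : ∀ f : Y → ℝ, (∀ y, 0 ≤ f y) →
      (∑ x, μ x * (∑ y : Fin d → Y, K x y * ∏ j, f (y j)) ^ (q / d)) ^ (1 / q)
        ≤ A * N f) :
    -- off-diagonal conclusion with constant d·A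
    ∀ f : Fin d → Y → ℝ, (∀ j y, 0 ≤ f j y) →
      (∑ x, μ x * (∑ y : Fin d → Y, K x y * ∏ j, f j (y j)) ^ (q / d)) ^ (1 / q)
        ≤ d * A * (∏ j, N (f j)) ^ (1 / (d : ℝ)) := by
  intro f hf
  have hd0 : d ≠ 0 := by omega
  have hq0 : 0 < q := by linarith
  set C := (∏ j, N (f j)) ^ (1 / (d : ℝ))
  have hC : 0 ≤ C := Real.rpow_nonneg (prod_nonneg fun j _ => hN_nonneg _) _
  by_cases hzero : ∃ j, N (f j) = 0
  · obtain ⟨j, hj⟩ := hzero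
    change (∑ x, μ x * multilinearOp K f x ^ (q / d)) ^ (1 / q) ≤ _
    have hqd : q / d ≠ 0 := by positivity
    simp only [multilinearOp_eq_zero (hN_defin _ hj), Real.zero_rpow hqd, mul_zero,
      sum_const_zero, Real.zero_rpow (one_div_pos.mpr hq0).ne']
    positivity
  push Not at hzero
  have hpos : ∀ j, 0 < N (f j) := fun j => (hN_nonneg _).lt_of_ne' (hzero j)
  set c : Fin d → ℝ := fun j => C / N (f j)
  have hc : ∀ j, 0 ≤ c j := fun j => div_nonneg hC (hN_nonneg _)
  set F : Y → ℝ := ∑ j, c j • f j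
  have hF : ∀ y, 0 ≤ F y := fun y => by
    simpa only [F, Finset.sum_apply, Pi.smul_apply, smul_eq_mul] using
      sum_nonneg fun j (_ : j ∈ univ) => mul_nonneg (hc j) (hf j y)
  have hNF : N F ≤ d * C :=
    calc N F ≤ ∑ j, |c j| * N (f j) := le_sum_abs_mul_of_subadditive hN_add hN_smul _ _ _
      _ = d * C := by simp [abs_of_nonneg (hc _), c, div_mul_cancel₀ _ (hpos _).ne']
  calc (∑ x, μ x * multilinearOp K f x ^ (q / d)) ^ (1 / q)
      ≤ (∑ x, μ x * multilinearOp K (fun _ => F) x ^ (q / d)) ^ (1 / q) :=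
        rpow_sum_mul_rpow_le_of_le hμ (multilinearOp_nonneg hK hf)
          (multilinearOp_le_diagonal hK hf hc (prod_geomMean_div_eq_one hd0 hpos))
          (by positivity) (by positivity)
    _ ≤ A * N F := hdiag F hF
    _ ≤ A * (d * C) := mul_le_mul_of_nonneg_left hNF hA.le
    _ = d * A * C := by ring

theorem diagonal_implies_offdiagonal
    (d : ℕ) (hd : 1 ≤ d)
    (X : Type*) [Fintype X] (μ : X → ℝ) (hμ : ∀ x, 0 ≤ μ x)
    (Y : Type*) [Fintype Y]
    -- lattice norm on ℝ^Y
    (N : (Y → ℝ) → ℝ)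
    (hN_nonneg : ∀ f, 0 ≤ N f)
    (hN_add : ∀ f g, N (f + g) ≤ N f + N g)
    (hN_smul : ∀ (c : ℝ) f, N (c • f) = |c| * N f)
    (hN_defin : ∀ f, N f = 0 → f = 0)
    (hN_lattice : ∀ f g, (∀ y, |f y| ≤ |g y|) → N f ≤ N g)
    -- nonnegative kernel
    (K : X → (Fin d → Y) → ℝ) (hK : ∀ x y, 0 ≤ K x y)
    (q : ℝ) (hq : 1 ≤ q)
    (A : ℝ) (hA : 0 < A)
    -- diagonal hypothesis: ‖T(f,…,f)^{1/d}‖_{L^q(μ)} ≤ A N(f)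
    (hdiag : ∀ f : Y → ℝ, (∀ y, 0 ≤ f y) →
      (∑ x, μ x * (∑ y : Fin d → Y, K x y * ∏ j, f (y j)) ^ (q / d)) ^ (1 / q)
        ≤ A * N f) :
    -- off-diagonal conclusion with constant d·A
    ∀ f : Fin d → Y → ℝ, (∀ j y, 0 ≤ f j y) →
      (∑ x, μ x * (∑ y : Fin d → Y, K x y * ∏ j, f j (y j)) ^ (q / d)) ^ (1 / q)
        ≤ d * A * (∏ j, N (f j)) ^ (1 / (d : ℝ)) :=
  diagonal_implies_offdiagonal_general d hd X μ hμ Y N hN_nonneg hN_add hN_smul hN_defin K hK q hq A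
    hA hdiag
end

section
/- Let X be a finite set with a weight μ : X → [0,∞), let Y_1, …, Y_d be finite sets with lattice norms N_j on ℝ^{Y_j}, let K : X × Y_1 × ⋯ × Y_d → [0,∞) be a kernel with associated positive multilinear operator T, let 1 ≤ q < ∞ with conjugate exponent q', and let A > 0. Suppose that for every M : X → [0,∞) with ‖M‖_{ℓ^{q'}(μ)} ≤ 1 there exist kernels g_j : X × Y_j → [0,∞) such that M(x)^d K(x,y_1,…,y_d) ≤ g_1(x,y_1)⋯g_d(x,y_d) for all x, y_1, …, y_d, and such that for every j and every nonnegative f ∈ ℝ^{Y_j}, Σ_{x∈X} μ(x) Σ_{y∈Y_j} g_j(x,y) f(y) ≤ A·N_j(f). Then for all nonnegative f_j ∈ ℝ^{Y_j}, ‖T(f_1,…,f_d)^{1/d}‖_{L^q(μ)} ≤ A·(N_1(f_1)⋯N_d(f_d))^{1/d}. -/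
/-!
Write `t = T(f₁,…,f_d)` and `u = t^{1/d}`. The `L^q(μ)` norm of `u` is attained by pairing `u`
with `M = u^{q-1} / ‖u‖_q^{q-1}`, which lies in the unit ball of `ℓ^{q'}(μ)`. For the kernels `gⱼ`
that factorise `M^d K`, the pointwise bound `M^d t ≤ ∏ⱼ Sⱼ` with `Sⱼ x = Σ_y gⱼ(x,y) fⱼ(y)` and
Hölder's inequality for `d` factors with exponents `1/d` give
`‖u‖_q = Σ μ M u ≤ ∏ⱼ (Σ μ Sⱼ)^{1/d} ≤ A (∏ⱼ Nⱼ fⱼ)^{1/d}`.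
-/

open Finset Real

namespace Real

lemma rpow_eq_rpow_mul_div_rpow {a b : ℝ} (p : ℝ) (ha : 0 ≤ a) (hab : a ≤ b) :
    a ^ p = b ^ p * (a / b) ^ p := by
  obtain rfl | hb := (ha.trans hab).eq_or_lt
  · obtain rfl : a = 0 := le_antisymm hab ha
    rcases eq_or_ne p 0 with rfl | hp <;> simp [zero_rpow, *]
  · rw [← mul_rpow hb.le (div_nonneg ha hb.le), mul_div_cancel₀ _ hb.ne']

theorem mul_rpow_le_prod_rpow_of_pow_mul_le {ι : Type*} {s : Finset ι} {n : ℕ}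
    (hn : n ≠ 0) {m a : ℝ} {b : ι → ℝ} (hm : 0 ≤ m) (ha : 0 ≤ a) (hb : ∀ i ∈ s, 0 ≤ b i)
    (h : m ^ n * a ≤ ∏ i ∈ s, b i) :
    m * a ^ (1 / (n : ℝ)) ≤ ∏ i ∈ s, b i ^ (1 / (n : ℝ)) :=
  calc m * a ^ (1 / (n : ℝ)) = (m ^ n * a) ^ (1 / (n : ℝ)) := by
        rw [mul_rpow (by positivity) ha, one_div, pow_rpow_inv_natCast hm hn]
    _ ≤ (∏ i ∈ s, b i) ^ (1 / (n : ℝ)) := by gcongr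
    _ = ∏ i ∈ s, b i ^ (1 / (n : ℝ)) := (finsetProd_rpow s b hb _).symm

theorem prod_fin_const_mul_rpow_one_div {n : ℕ} (hn : n ≠ 0) {A : ℝ} {c : Fin n → ℝ}
    (hA : 0 ≤ A) (hc : ∀ i, 0 ≤ c i) :
    ∏ i, (A * c i) ^ (1 / (n : ℝ)) = A * (∏ i, c i) ^ (1 / (n : ℝ)) := by
  rw [prod_congr rfl fun i _ ↦ mul_rpow hA (hc i), prod_mul_distrib, prod_const, card_univ,
    Fintype.card_fin, finsetProd_rpow _ _ fun i _ ↦ hc i, ← rpow_natCast, ← rpow_mul hA,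
    one_div_mul_cancel (by positivity), rpow_one]

-- Normalising each factor by its sum reduces this to the weighted AM–GM inequality.
theorem sum_prod_rpow_le_prod_sum_rpow {ι α : Type*} (s : Finset ι) (t : Finset α)
    {b : ι → α → ℝ} {p : ι → ℝ} (hb : ∀ i ∈ s, ∀ x ∈ t, 0 ≤ b i x)
    (hp : ∀ i ∈ s, 0 ≤ p i) (hp1 : ∑ i ∈ s, p i = 1) :
    ∑ x ∈ t, ∏ i ∈ s, b i x ^ p i ≤ ∏ i ∈ s, (∑ x ∈ t, b i x) ^ p i := by
  set B : ι → ℝ := fun i ↦ ∑ x ∈ t, b i x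
  have hB : ∀ i ∈ s, 0 ≤ B i := fun i hi ↦ sum_nonneg (hb i hi)
  calc ∑ x ∈ t, ∏ i ∈ s, b i x ^ p i
      = ∑ x ∈ t, (∏ i ∈ s, B i ^ p i) * ∏ i ∈ s, (b i x / B i) ^ p i := by
        refine sum_congr rfl fun x hx ↦ ?_
        rw [← prod_mul_distrib]
        exact prod_congr rfl fun i hi ↦ rpow_eq_rpow_mul_div_rpow _ (hb i hi x hx)
          (single_le_sum (hb i hi) hx)
    _ ≤ ∑ x ∈ t, (∏ i ∈ s, B i ^ p i) * ∑ i ∈ s, p i * (b i x / B i) := by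
        gcongr with x hx
        · exact prod_nonneg fun i hi ↦ rpow_nonneg (hB i hi) _
        · exact geom_mean_le_arith_mean_weighted s p _ hp hp1
            fun i hi ↦ div_nonneg (hb i hi x hx) (hB i hi)
    _ = (∏ i ∈ s, B i ^ p i) * ∑ i ∈ s, p i * (B i / B i) := by
        simp_rw [← mul_sum, sum_comm (s := t), ← mul_sum, ← sum_div, B]
    _ ≤ ∏ i ∈ s, B i ^ p i := by
        refine mul_le_of_le_one_right (prod_nonneg fun i hi ↦ rpow_nonneg (hB i hi) _) ?_
        calc ∑ i ∈ s, p i * (B i / B i) ≤ ∑ i ∈ s, p i := by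
              gcongr with i hi
              exact mul_le_of_le_one_right (hp i hi) (div_self_le_one _)
          _ = 1 := hp1

theorem sum_mul_prod_rpow_le_prod_sum_mul_rpow {ι α : Type*} (s : Finset ι) (t : Finset α)
    {w : α → ℝ} {b : ι → α → ℝ} {p : ι → ℝ} (hw : ∀ x ∈ t, 0 ≤ w x)
    (hb : ∀ i ∈ s, ∀ x ∈ t, 0 ≤ b i x) (hp : ∀ i ∈ s, 0 ≤ p i) (hp1 : ∑ i ∈ s, p i = 1) :
    ∑ x ∈ t, w x * ∏ i ∈ s, b i x ^ p i ≤ ∏ i ∈ s, (∑ x ∈ t, w x * b i x) ^ p i := by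
  calc ∑ x ∈ t, w x * ∏ i ∈ s, b i x ^ p i = ∑ x ∈ t, ∏ i ∈ s, (w x * b i x) ^ p i := by
        refine sum_congr rfl fun x hx ↦ ?_
        rw [prod_congr rfl fun i hi ↦ mul_rpow (hw x hx) (hb i hi x hx), prod_mul_distrib,
          ← rpow_sum_of_nonneg (hw x hx) hp, hp1, rpow_one]
    _ ≤ _ := sum_prod_rpow_le_prod_sum_rpow s t
        (fun i hi x hx ↦ mul_nonneg (hw x hx) (hb i hi x hx)) hp hp1

end Real

-- The nonnegative part of the unit ball of `ℓ^{q'}(μ)`, `q' = q/(q-1)`;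
-- for `q = 1` it is the sup-norm ball.
def dualUnitBall {X : Type*} [Fintype X] (μ : X → ℝ) (q : ℝ) : Set (X → ℝ) :=
  {M | (∀ x, 0 ≤ M x) ∧ (q = 1 → ∀ x, M x ≤ 1) ∧
    (1 < q → (∑ x, μ x * M x ^ (q / (q - 1))) ^ ((q - 1) / q) ≤ 1)}

theorem exists_norming_mem_dualUnitBall {X : Type*} [Fintype X] {μ u : X → ℝ} {q : ℝ}
    (hμ : ∀ x, 0 ≤ μ x) (hu : ∀ x, 0 ≤ u x) (hq : 1 ≤ q) :
    ∃ M ∈ dualUnitBall μ q, (∑ x, μ x * u x ^ q) ^ (1 / q) = ∑ x, μ x * (M x * u x) := by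
  set P := ∑ x, μ x * u x ^ q
  have hq0 : q ≠ 0 := by positivity
  have hP0 : 0 ≤ P := sum_nonneg fun x _ ↦ mul_nonneg (hμ x) (rpow_nonneg (hu x) q)
  rcases hP0.eq_or_lt' with hP | hP
  · refine ⟨0, ⟨fun _ ↦ le_rfl, fun _ _ ↦ zero_le_one, fun hq1 ↦ ?_⟩, ?_⟩
    · have : q / (q - 1) ≠ 0 := div_ne_zero hq0 (by linarith)
      simp [zero_rpow this, zero_rpow_le_one]
    · simp [hP, zero_rpow (inv_ne_zero hq0)]
  set c := P ^ ((q - 1) / q)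
  have hc : 0 < c := rpow_pos_of_pos hP _
  refine ⟨fun x ↦ u x ^ (q - 1) / c,
    ⟨fun x ↦ div_nonneg (rpow_nonneg (hu x) _) hc.le, ?_, ?_⟩, ?_⟩
  · rintro rfl x
    simp [c]
  · intro hq1
    have hq1' : q - 1 ≠ 0 := by linarith
    have hM : ∀ x, (u x ^ (q - 1) / c) ^ (q / (q - 1)) = u x ^ q / P := fun x ↦ by
      rw [div_rpow (rpow_nonneg (hu x) _) hc.le, ← rpow_mul (hu x), ← rpow_mul hP0,
        mul_div_cancel₀ _ hq1', div_mul_div_cancel₀ hq0, div_self hq1', rpow_one]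
    have hsum : ∑ x, μ x * (u x ^ q / P) = 1 := by
      simp_rw [mul_div_assoc', ← sum_div]
      exact div_self hP.ne'
    simp_rw [hM, hsum, one_rpow, le_refl]
  · calc P ^ (1 / q) = P / c := by
          rw [eq_div_iff hc.ne', ← rpow_add hP, ← add_div, add_sub_cancel, div_self hq0, rpow_one]
      _ = ∑ x, μ x * (u x ^ (q - 1) / c * u x) := by
          rw [sum_div]
          refine sum_congr rfl fun x _ ↦ ?_
          rw [div_mul_eq_mul_div, ← rpow_add_one' (hu x) (by linarith), sub_add_cancel,
            mul_div_assoc]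

theorem mul_sum_mul_prod_le_prod_sum {ι : Type*} [Fintype ι] [DecidableEq ι] {Y : ι → Type*}
    [∀ i, Fintype (Y i)] {c : ℝ} {K : (∀ i, Y i) → ℝ} {g f : ∀ i, Y i → ℝ}
    (hK : ∀ y, c * K y ≤ ∏ i, g i (y i)) (hf : ∀ i y, 0 ≤ f i y) :
    c * ∑ y, K y * ∏ i, f i (y i) ≤ ∏ i, ∑ y, g i y * f i y := by
  rw [Fintype.prod_sum, mul_sum]
  gcongr with y
  rw [← mul_assoc, prod_mul_distrib]
  exact mul_le_mul_of_nonneg_right (hK y) (prod_nonneg fun i _ ↦ hf i (y i))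

theorem factorisation_implies_norm_bound_general
    (d : ℕ) (hd : 1 ≤ d)
    (X : Type*) [Fintype X] (μ : X → ℝ) (hμ : ∀ x, 0 ≤ μ x)
    (Y : Fin d → Type*) [∀ j, Fintype (Y j)]
    -- lattice norms on ℝ^{Y_j}
    (N : ∀ j, (Y j → ℝ) → ℝ)
    (hN_nonneg : ∀ j f, 0 ≤ N j f)
    -- nonnegative kernel
    (K : X → (∀ j, Y j) → ℝ) (hK : ∀ x y, 0 ≤ K x y)
    (q : ℝ) (hq : 1 ≤ q)
    (A : ℝ) (hA : 0 < A)
    -- hypothesis: the duality (factorisation) property holds for every admissible M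
    (hdual : ∀ M : X → ℝ, (∀ x, 0 ≤ M x) →
      (q = 1 → ∀ x, M x ≤ 1) →
      (1 < q → (∑ x, μ x * M x ^ (q / (q - 1))) ^ ((q - 1) / q) ≤ 1) →
      ∃ g : ∀ j, X → Y j → ℝ,
        (∀ j x y, 0 ≤ g j x y) ∧
        (∀ x (y : ∀ j, Y j), M x ^ d * K x y ≤ ∏ j, g j x (y j)) ∧
        (∀ j (f : Y j → ℝ), (∀ y, 0 ≤ f y) →
          ∑ x, μ x * ∑ y, g j x y * f y ≤ A * N j f)) :
    -- conclusion: ‖T(f₁,…,f_d)^{1/d}‖_{L^q(μ)} ≤ A (N₁(f₁)⋯N_d(f_d))^{1/d}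
    ∀ f : ∀ j, Y j → ℝ, (∀ j y, 0 ≤ f j y) →
      (∑ x, μ x * (∑ y : ∀ j, Y j, K x y * ∏ j, f j (y j)) ^ (q / d)) ^ (1 / q)
        ≤ A * (∏ j, N j (f j)) ^ (1 / (d : ℝ)) := by
  intro f hf
  have hd0 : d ≠ 0 := by omega
  set t : X → ℝ := fun x ↦ ∑ y : ∀ j, Y j, K x y * ∏ j, f j (y j)
  have ht : ∀ x, 0 ≤ t x := fun x ↦
    sum_nonneg fun y _ ↦ mul_nonneg (hK x y) (prod_nonneg fun j _ ↦ hf j (y j))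
  obtain ⟨M, ⟨hM0, hM1, hMq⟩, hM⟩ :=
    exists_norming_mem_dualUnitBall hμ (fun x ↦ rpow_nonneg (ht x) (1 / d)) hq
  obtain ⟨g, hg0, hgK, hgN⟩ := hdual M hM0 hM1 hMq
  set S : ∀ j, X → ℝ := fun j x ↦ ∑ y, g j x y * f j y
  have hS : ∀ j x, 0 ≤ S j x := fun j x ↦
    sum_nonneg fun y _ ↦ mul_nonneg (hg0 j x y) (hf j y)
  have hμS : ∀ j, 0 ≤ ∑ x, μ x * S j x := fun j ↦
    sum_nonneg fun x _ ↦ mul_nonneg (hμ x) (hS j x)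
  calc (∑ x, μ x * t x ^ (q / d)) ^ (1 / q)
      = (∑ x, μ x * (t x ^ (1 / (d : ℝ))) ^ q) ^ (1 / q) := by
        simp_rw [← rpow_mul (ht _), one_div_mul_eq_div]
    _ = ∑ x, μ x * (M x * t x ^ (1 / (d : ℝ))) := hM
    _ ≤ ∑ x, μ x * ∏ j, S j x ^ (1 / (d : ℝ)) := by
        gcongr with x
        · exact hμ x
        · exact mul_rpow_le_prod_rpow_of_pow_mul_le hd0 (hM0 x) (ht x) (fun j _ ↦ hS j x)
            (mul_sum_mul_prod_le_prod_sum (hgK x) hf)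
    _ ≤ ∏ j, (∑ x, μ x * S j x) ^ (1 / (d : ℝ)) :=
        sum_mul_prod_rpow_le_prod_sum_mul_rpow _ _ (fun x _ ↦ hμ x) (fun j _ x _ ↦ hS j x)
          (fun _ _ ↦ by positivity) (by simp [hd0])
    _ ≤ ∏ j, (A * N j (f j)) ^ (1 / (d : ℝ)) := by
        refine prod_le_prod (fun j _ ↦ rpow_nonneg (hμS j) _) fun j _ ↦ ?_
        exact rpow_le_rpow (hμS j) (hgN j (f j) (hf j)) (by positivity)
    _ = A * (∏ j, N j (f j)) ^ (1 / (d : ℝ)) :=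
        prod_fin_const_mul_rpow_one_div hd0 hA.le fun j ↦ hN_nonneg j _

theorem factorisation_implies_norm_bound
    (d : ℕ) (hd : 1 ≤ d)
    (X : Type*) [Fintype X] (μ : X → ℝ) (hμ : ∀ x, 0 ≤ μ x)
    (Y : Fin d → Type*) [∀ j, Fintype (Y j)]
    -- lattice norms on ℝ^{Y_j}
    (N : ∀ j, (Y j → ℝ) → ℝ)
    (hN_nonneg : ∀ j f, 0 ≤ N j f)
    (hN_add : ∀ j f g, N j (f + g) ≤ N j f + N j g)
    (hN_smul : ∀ j (c : ℝ) f, N j (c • f) = |c| * N j f)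
    (hN_defin : ∀ j f, N j f = 0 → f = 0)
    (hN_lattice : ∀ j f g, (∀ y, |f y| ≤ |g y|) → N j f ≤ N j g)
    -- nonnegative kernel
    (K : X → (∀ j, Y j) → ℝ) (hK : ∀ x y, 0 ≤ K x y)
    (q : ℝ) (hq : 1 ≤ q)
    (A : ℝ) (hA : 0 < A)
    -- hypothesis: the duality (factorisation) property holds for every admissible M
    (hdual : ∀ M : X → ℝ, (∀ x, 0 ≤ M x) →
      (q = 1 → ∀ x, M x ≤ 1) →
      (1 < q → (∑ x, μ x * M x ^ (q / (q - 1))) ^ ((q - 1) / q) ≤ 1) →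
      ∃ g : ∀ j, X → Y j → ℝ,
        (∀ j x y, 0 ≤ g j x y) ∧
        (∀ x (y : ∀ j, Y j), M x ^ d * K x y ≤ ∏ j, g j x (y j)) ∧
        (∀ j (f : Y j → ℝ), (∀ y, 0 ≤ f y) →
          ∑ x, μ x * ∑ y, g j x y * f y ≤ A * N j f)) :
    -- conclusion: ‖T(f₁,…,f_d)^{1/d}‖_{L^q(μ)} ≤ A (N₁(f₁)⋯N_d(f_d))^{1/d}
    ∀ f : ∀ j, Y j → ℝ, (∀ j y, 0 ≤ f j y) →
      (∑ x, μ x * (∑ y : ∀ j, Y j, K x y * ∏ j, f j (y j)) ^ (q / d)) ^ (1 / q)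
        ≤ A * (∏ j, N j (f j)) ^ (1 / (d : ℝ)) :=
  factorisation_implies_norm_bound_general d hd X μ hμ Y N hN_nonneg K hK q hq A hA hdual
end
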